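/- arXiv:2604.18578 — 12 statements merged into one kernel-verified Lean document; each statement's English description precedes it below -/
import Mathlib

section
/- Let μ be a soft-median of q under p at temperature λ, and define ρ*(a) = 1 + ε·tanh((q(a) − μ)/(2λ)) for each a ∈ A. Then (i) 1 − ε < ρ*(a) < 1 + ε for every a; (ii) ∑_{a∈A} p(a)·ρ*(a) = 1; and (iii) for every ρ : A → ℝ satisfying 1 − ε < ρ(a) < 1 + ε for all a and ∑_{a∈A} p(a)·ρ(a) = 1, one has ∑_{a∈A} p(a)·(ρ(a)·q(a) − λ·H(ρ(a))) ≤ ∑_{a∈A} p(a)·(ρ*(a)·q(a) − λ·H(ρ*(a))). That is, ρ* is the maximizer of the entropy-regularized linear objective over the bounded-ratio simplex. -/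
noncomputable def H (ε ρ : ℝ) : ℝ :=
  (ρ - 1 + ε) * Real.log (ρ - 1 + ε) + (1 + ε - ρ) * Real.log (1 + ε - ρ)

lemma tanh_bounds (t : ℝ) : -1 < Real.tanh t ∧ Real.tanh t < 1 := by
  have hc : 0 < Real.cosh t := Real.cosh_pos t
  have h1 : Real.cosh t + Real.sinh t = Real.exp t := Real.cosh_add_sinh t
  have h2 : Real.cosh t - Real.sinh t = Real.exp (-t) := Real.cosh_sub_sinh t
  have he1 : 0 < Real.exp t := Real.exp_pos t
  have he2 : 0 < Real.exp (-t) := Real.exp_pos (-t)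
  rw [Real.tanh_eq_sinh_div_cosh]
  constructor
  · rw [lt_div_iff₀ hc]; linarith
  · rw [div_lt_iff₀ hc]; linarith

lemma xlogx_convex (u v : ℝ) (hu : 0 < u) (hv : 0 < v) :
    v * Real.log v + (Real.log v + 1) * (u - v) ≤ u * Real.log u := by
  have h1 : Real.log (v / u) ≤ v / u - 1 :=
    Real.log_le_sub_one_of_pos (by positivity)
  have h2 : Real.log (v / u) = Real.log v - Real.log u :=
    Real.log_div hv.ne' hu.ne'
  have h3 : u * (v / u) = v := by field_simp
  nlinarith [mul_le_mul_of_nonneg_left h1 hu.le]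

lemma H_convex (ε x y : ℝ) (hx1 : 1 - ε < x) (hx2 : x < 1 + ε)
    (hy1 : 1 - ε < y) (hy2 : y < 1 + ε) :
    H ε y + (Real.log (y - 1 + ε) - Real.log (1 + ε - y)) * (x - y) ≤ H ε x := by
  have a1 : 0 < x - 1 + ε := by linarith
  have a2 : 0 < 1 + ε - x := by linarith
  have a3 : 0 < y - 1 + ε := by linarith
  have a4 : 0 < 1 + ε - y := by linarith
  have c1 := xlogx_convex (x - 1 + ε) (y - 1 + ε) a1 a3
  have c2 := xlogx_convex (1 + ε - x) (1 + ε - y) a2 a4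
  unfold H
  nlinarith [c1, c2]

lemma log_ratio (ε t : ℝ) (hε : 0 < ε) :
    Real.log ((1 + ε * Real.tanh t) - 1 + ε) - Real.log (1 + ε - (1 + ε * Real.tanh t))
      = 2 * t := by
  have hc : 0 < Real.cosh t := Real.cosh_pos t
  have h1 : (1 + ε * Real.tanh t) - 1 + ε = ε * (Real.exp t / Real.cosh t) := by
    rw [Real.tanh_eq_sinh_div_cosh]
    field_simp
    rw [← Real.cosh_add_sinh t]; ring
  have h2 : 1 + ε - (1 + ε * Real.tanh t) = ε * (Real.exp (-t) / Real.cosh t) := by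
    rw [Real.tanh_eq_sinh_div_cosh]
    field_simp
    rw [← Real.cosh_sub_sinh t]; ring
  rw [h1, h2,
    Real.log_mul hε.ne' (by positivity),
    Real.log_mul hε.ne' (by positivity),
    Real.log_div (Real.exp_ne_zero t) hc.ne',
    Real.log_div (Real.exp_ne_zero (-t)) hc.ne',
    Real.log_exp, Real.log_exp]
  ring

theorem stmt0 {A : Type*} [Fintype A] [Nonempty A]
    (p : A → ℝ) (hp : ∀ a, 0 < p a) (hpsum : ∑ a, p a = 1)
    (q : A → ℝ) (lam : ℝ) (hlam : 0 < lam)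
    (ε : ℝ) (hε : ε ∈ Set.Ioo (0 : ℝ) 1)
    (μ : ℝ) (hμ : ∑ a, p a * Real.tanh ((q a - μ) / (2 * lam)) = 0)
    (ρstar : A → ℝ)
    (hρstar : ∀ a, ρstar a = 1 + ε * Real.tanh ((q a - μ) / (2 * lam))) :
    (∀ a, 1 - ε < ρstar a ∧ ρstar a < 1 + ε) ∧
    (∑ a, p a * ρstar a = 1) ∧
    (∀ ρ : A → ℝ, (∀ a, 1 - ε < ρ a ∧ ρ a < 1 + ε) → (∑ a, p a * ρ a = 1) →
      ∑ a, p a * (ρ a * q a - lam * H ε (ρ a)) ≤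
        ∑ a, p a * (ρstar a * q a - lam * H ε (ρstar a))) := by
  obtain ⟨hε0, hε1⟩ := hε
  have hbnd : ∀ a, 1 - ε < ρstar a ∧ ρstar a < 1 + ε := by
    intro a
    obtain ⟨ht1, ht2⟩ := tanh_bounds ((q a - μ) / (2 * lam))
    rw [hρstar a]
    constructor <;> nlinarith
  have hsum1 : ∑ a, p a * ρstar a = 1 := by
    have : ∀ a, p a * ρstar a = p a + ε * (p a * Real.tanh ((q a - μ) / (2 * lam))) := by
      intro a; rw [hρstar a]; ring
    rw [Finset.sum_congr rfl (fun a _ => this a), Finset.sum_add_distrib,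
      ← Finset.mul_sum, hμ, hpsum]; ring
  refine ⟨hbnd, hsum1, ?_⟩
  intro ρ hρ hρsum
  have key : ∀ a, p a * (ρ a * q a - lam * H ε (ρ a)) ≤
      p a * (ρstar a * q a - lam * H ε (ρstar a)) + μ * (p a * ρ a - p a * ρstar a) := by
    intro a
    set t := (q a - μ) / (2 * lam) with ht
    have hlr : Real.log (ρstar a - 1 + ε) - Real.log (1 + ε - ρstar a) = (q a - μ) / lam := by
      rw [hρstar a, log_ratio ε t hε0, ht]; field_simp
    obtain ⟨hx1, hx2⟩ := hρ a
    obtain ⟨hy1, hy2⟩ := hbnd a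
    have hc := H_convex ε (ρ a) (ρstar a) hx1 hx2 hy1 hy2
    rw [hlr] at hc
    have hc' : lam * H ε (ρstar a) + (q a - μ) * (ρ a - ρstar a) ≤ lam * H ε (ρ a) := by
      have := mul_le_mul_of_nonneg_left hc hlam.le
      have hd : lam * ((q a - μ) / lam) = q a - μ := by field_simp
      nlinarith [this]
    nlinarith [mul_le_mul_of_nonneg_left hc' (hp a).le]
  calc ∑ a, p a * (ρ a * q a - lam * H ε (ρ a))
      ≤ ∑ a, (p a * (ρstar a * q a - lam * H ε (ρstar a)) + μ * (p a * ρ a - p a * ρstar a)) :=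
        Finset.sum_le_sum (fun a _ => key a)
    _ = ∑ a, p a * (ρstar a * q a - lam * H ε (ρstar a))
        + μ * ((∑ a, p a * ρ a) - ∑ a, p a * ρstar a) := by
        rw [Finset.sum_add_distrib, ← Finset.mul_sum, Finset.sum_sub_distrib]
    _ = ∑ a, p a * (ρstar a * q a - lam * H ε (ρstar a)) := by
        rw [hρsum, hsum1]; ring
end

section
/- A real number μ satisfies ∑_{a∈A} p(a)·tanh((q(a) − μ)/(2λ)) = 0 if and only if μ is a global minimizer over ℝ of the function F(μ') = ∑_{a∈A} p(a)·g((q(a) − μ')/λ), i.e. F(μ) ≤ F(μ') for every μ' ∈ ℝ. -/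
noncomputable def g (x : ℝ) : ℝ :=
  Real.log (Real.exp (-x / 2) + Real.exp (x / 2))

lemma tanh_eq' (x : ℝ) : Real.tanh x = (Real.exp x - Real.exp (-x)) / (Real.exp x + Real.exp (-x)) := by
  rw [Real.tanh_eq_sinh_div_cosh, Real.sinh_eq, Real.cosh_eq]
  have h : Real.exp x + Real.exp (-x) > 0 := by positivity
  field_simp

lemma tanh_mono : Monotone Real.tanh := by
  intro x y hxy
  rw [tanh_eq', tanh_eq']
  have hx : (0:ℝ) < Real.exp x + Real.exp (-x) := by positivity
  have hy : (0:ℝ) < Real.exp y + Real.exp (-y) := by positivity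
  rw [div_le_div_iff₀ hx hy]
  have h1 : Real.exp x * Real.exp (-y) ≤ Real.exp y * Real.exp (-x) := by
    rw [← Real.exp_add, ← Real.exp_add]
    exact Real.exp_le_exp.2 (by linarith)
  nlinarith [Real.exp_pos x, Real.exp_pos y, Real.exp_pos (-x), Real.exp_pos (-y)]

lemma g_hasDeriv (x : ℝ) : HasDerivAt g (Real.tanh (x / 2) / 2) x := by
  have h1 : HasDerivAt (fun x : ℝ => Real.exp (-x / 2) + Real.exp (x / 2))
      (Real.exp (-x / 2) * (-1/2) + Real.exp (x / 2) * (1/2)) x := by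
    have ha : HasDerivAt (fun x : ℝ => -x / 2) (-1/2) x := by
      simpa using ((hasDerivAt_id x).neg.div_const 2)
    have hb : HasDerivAt (fun x : ℝ => x / 2) (1/2) x := by
      simpa using ((hasDerivAt_id x).div_const 2)
    exact ((Real.hasDerivAt_exp _).comp x ha).add ((Real.hasDerivAt_exp _).comp x hb)
  have hpos : Real.exp (-x / 2) + Real.exp (x / 2) ≠ 0 := by positivity
  have := h1.log hpos
  convert this using 1
  · rfl
  rw [tanh_eq']
  have hp : (0:ℝ) < Real.exp (x/2) + Real.exp (-(x/2)) := by positivity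
  have : -x/2 = -(x/2) := by ring
  rw [this]
  field_simp
  ring

theorem stmt2 {A : Type*} [Fintype A] [Nonempty A]
    (p : A → ℝ) (hp : ∀ a, 0 < p a) (hpsum : ∑ a, p a = 1)
    (q : A → ℝ) (lam : ℝ) (hlam : 0 < lam) (μ : ℝ) :
    (∑ a, p a * Real.tanh ((q a - μ) / (2 * lam)) = 0) ↔
      (∀ μ' : ℝ, ∑ a, p a * g ((q a - μ) / lam) ≤ ∑ a, p a * g ((q a - μ') / lam)) := by
  set F : ℝ → ℝ := fun x => ∑ a, p a * g ((q a - x) / lam) with hF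
  have hderiv : ∀ x : ℝ, HasDerivAt F
      (-(1/(2*lam)) * ∑ a, p a * Real.tanh ((q a - x) / (2 * lam))) x := by
    intro x
    have h : ∀ a : A, HasDerivAt (fun x => p a * g ((q a - x) / lam))
        (p a * (-(1/(2*lam)) * Real.tanh ((q a - x) / (2 * lam)))) x := by
      intro a
      have hin : HasDerivAt (fun x : ℝ => (q a - x) / lam) (-1 / lam) x := by
        simpa using (((hasDerivAt_id x).const_sub (q a)).div_const lam)
      have := ((g_hasDeriv ((q a - x)/lam)).comp x hin).const_mul (p a)
      convert this using 1
      · rfl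
      · rfl
      · rfl
      rw [div_div, mul_comm lam 2]
      ring
    have := HasDerivAt.fun_sum (u := Finset.univ) (fun a _ => h a)
    convert this using 1
    · rfl
    · rfl
    rw [Finset.mul_sum]
    exact Finset.sum_congr rfl fun i _ => by ring
  constructor
  · intro hsum μ'
    -- F' μ = 0; F' nonneg on [μ,∞), nonpos on (-∞,μ]
    have hdiff : ∀ x, DifferentiableAt ℝ F x := fun x => (hderiv x).differentiableAt
    have hderiveq : ∀ x, deriv F x = -(1/(2*lam)) * ∑ a, p a * Real.tanh ((q a - x) / (2 * lam)) :=
      fun x => (hderiv x).deriv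
    have hmono : MonotoneOn F (Set.Ici μ) := by
      apply monotoneOn_of_deriv_nonneg (convex_Ici μ)
        (fun x _ => (hdiff x).continuousAt.continuousWithinAt)
        (fun x hx => (hdiff x).differentiableWithinAt)
      intro x hx
      rw [hderiveq]
      have hle : ∑ a, p a * Real.tanh ((q a - x) / (2 * lam)) ≤ 0 := by
        rw [← hsum]
        apply Finset.sum_le_sum
        intro a _
        apply mul_le_mul_of_nonneg_left _ (hp a).le
        apply tanh_mono
        have : μ ≤ x := le_of_lt (by simpa using hx)
        apply div_le_div_of_nonneg_right ?_ ?_ |>.trans_eq rfl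
        · linarith
        · positivity
      have : (0:ℝ) < 1/(2*lam) := by positivity
      nlinarith
    have hanti : AntitoneOn F (Set.Iic μ) := by
      apply antitoneOn_of_deriv_nonpos (convex_Iic μ)
        (fun x _ => (hdiff x).continuousAt.continuousWithinAt)
        (fun x hx => (hdiff x).differentiableWithinAt)
      intro x hx
      rw [hderiveq]
      have hle : 0 ≤ ∑ a, p a * Real.tanh ((q a - x) / (2 * lam)) := by
        rw [← hsum]
        apply Finset.sum_le_sum
        intro a _
        apply mul_le_mul_of_nonneg_left _ (hp a).le
        apply tanh_mono
        have : x ≤ μ := le_of_lt (by simpa using hx)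
        apply div_le_div_of_nonneg_right ?_ ?_ |>.trans_eq rfl
        · linarith
        · positivity
      have : (0:ℝ) < 1/(2*lam) := by positivity
      nlinarith
    rcases le_total μ μ' with h | h
    · exact hmono (Set.self_mem_Ici) h h
    · exact hanti h (Set.self_mem_Iic) h
  · intro hmin
    have hloc : IsLocalMin F μ := by
      apply IsMinOn.isLocalMin (s := Set.univ)
      · intro x _; exact hmin x
      · exact Filter.univ_mem
    have h0 := hloc.deriv_eq_zero
    rw [(hderiv μ).deriv] at h0
    have hne : -(1/(2*lam)) ≠ 0 := neg_ne_zero.2 (by positivity)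
    exact (mul_eq_zero.1 h0).resolve_left hne
end

section
/- Let c ∈ ℝ, λ > 0, ε ∈ (0,1), and set ρ* = 1 + ε·tanh(c/(2λ)). Then ρ* ∈ (1−ε, 1+ε), ρ* satisfies the stationarity condition c − λ·(log(ρ* − 1 + ε) − log(1 + ε − ρ*)) = 0, and ρ* is the unique maximizer of ρ ↦ ρ·c − λ·H(ρ) on (1−ε, 1+ε): for every ρ ∈ (1−ε, 1+ε) with ρ ≠ ρ*, ρ·c − λ·H(ρ) < ρ*·c − λ·H(ρ*). -/
theorem stmt4 (c lam ε : ℝ) (hlam : 0 < lam) (hε : ε ∈ Set.Ioo (0 : ℝ) 1)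
    (ρstar : ℝ) (hρ : ρstar = 1 + ε * Real.tanh (c / (2 * lam))) :
    ρstar ∈ Set.Ioo (1 - ε) (1 + ε) ∧
    c - lam * (Real.log (ρstar - 1 + ε) - Real.log (1 + ε - ρstar)) = 0 ∧
    ∀ ρ ∈ Set.Ioo (1 - ε) (1 + ε), ρ ≠ ρstar →
      ρ * c - lam * H ε ρ < ρstar * c - lam * H ε ρstar := by
  obtain ⟨hε0, hε1⟩ := hε
  set x := c / (2 * lam) with hx
  have hcosh : 0 < Real.cosh x := Real.cosh_pos x
  have ht1 : 1 + Real.tanh x = Real.exp x / Real.cosh x := by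
    rw [Real.tanh_eq_sinh_div_cosh, ← Real.cosh_add_sinh]
    field_simp
  have ht2 : 1 - Real.tanh x = Real.exp (-x) / Real.cosh x := by
    rw [Real.tanh_eq_sinh_div_cosh, ← Real.cosh_sub_sinh]
    field_simp
  have ht1p : 0 < 1 + Real.tanh x := by rw [ht1]; positivity
  have ht2p : 0 < 1 - Real.tanh x := by rw [ht2]; positivity
  have hA : ρstar - 1 + ε = ε * (1 + Real.tanh x) := by rw [hρ]; ring
  have hB : 1 + ε - ρstar = ε * (1 - Real.tanh x) := by rw [hρ]; ring
  have hApos : 0 < ρstar - 1 + ε := by rw [hA]; positivity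
  have hBpos : 0 < 1 + ε - ρstar := by rw [hB]; positivity
  have hmem : ρstar ∈ Set.Ioo (1 - ε) (1 + ε) := ⟨by linarith, by linarith⟩
  have hlog : Real.log (ρstar - 1 + ε) - Real.log (1 + ε - ρstar) = 2 * x := by
    rw [hA, hB, Real.log_mul hε0.ne' ht1p.ne', Real.log_mul hε0.ne' ht2p.ne',
      ht1, ht2, Real.log_div (Real.exp_pos x).ne' hcosh.ne',
      Real.log_div (Real.exp_pos (-x)).ne' hcosh.ne', Real.log_exp, Real.log_exp]
    ring
  have hstat : c - lam * (Real.log (ρstar - 1 + ε) - Real.log (1 + ε - ρstar)) = 0 := by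
    rw [hlog, hx]; field_simp; ring
  have hc : c = lam * (Real.log (ρstar - 1 + ε) - Real.log (1 + ε - ρstar)) := by linarith
  have hderiv : ∀ y ∈ Set.Ioo (1 - ε) (1 + ε), HasDerivAt (fun ρ => ρ * c - lam * H ε ρ)
      (c - lam * (Real.log (y - 1 + ε) - Real.log (1 + ε - y))) y := by
    intro y hy
    have h1 : (0:ℝ) < y - 1 + ε := by linarith [hy.1]
    have h2 : (0:ℝ) < 1 + ε - y := by linarith [hy.2]
    have hu : HasDerivAt (fun ρ : ℝ => ρ - 1 + ε) 1 y := by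
      simpa using ((hasDerivAt_id y).sub_const 1).add_const ε
    have hv : HasDerivAt (fun ρ : ℝ => 1 + ε - ρ) (-1) y := by
      simpa using (hasDerivAt_id y).const_sub (1 + ε)
    have dl1 : HasDerivAt (fun ρ : ℝ => Real.log (ρ - 1 + ε)) ((y - 1 + ε)⁻¹ * 1) y :=
      by have := (Real.hasDerivAt_log h1.ne').comp y hu; exact this
    have dl2 : HasDerivAt (fun ρ : ℝ => Real.log (1 + ε - ρ)) ((1 + ε - y)⁻¹ * (-1)) y :=
      by have := (Real.hasDerivAt_log h2.ne').comp y hv; exact this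
    have d1 : HasDerivAt (fun ρ : ℝ => (ρ - 1 + ε) * Real.log (ρ - 1 + ε))
        (Real.log (y - 1 + ε) + 1) y := by
      have := hu.fun_mul dl1
      refine this.congr_deriv ?_
      field_simp
    have d2 : HasDerivAt (fun ρ : ℝ => (1 + ε - ρ) * Real.log (1 + ε - ρ))
        (-(Real.log (1 + ε - y) + 1)) y := by
      have := hv.fun_mul dl2
      refine this.congr_deriv ?_
      field_simp
      ring
    have dH : HasDerivAt (fun ρ => H ε ρ)
        (Real.log (y - 1 + ε) - Real.log (1 + ε - y)) y := by
      have := d1.fun_add d2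
      refine this.congr_deriv ?_
      ring
    have := ((hasDerivAt_id y).mul_const c).fun_sub ((hasDerivAt_const y lam).fun_mul dH)
    refine this.congr_deriv ?_
    ring
  have hcont : ∀ s : Set ℝ, s ⊆ Set.Ioo (1 - ε) (1 + ε) →
      ContinuousOn (fun ρ => ρ * c - lam * H ε ρ) s := by
    intro s hs y hy
    exact ((hderiv y (hs hy)).continuousAt).continuousWithinAt
  refine ⟨hmem, hstat, ?_⟩
  intro ρ hρm hne
  rcases lt_or_gt_of_ne hne with hlt | hgt
  · have hsub : Set.Icc ρ ρstar ⊆ Set.Ioo (1 - ε) (1 + ε) := fun y hy =>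
      ⟨lt_of_lt_of_le hρm.1 hy.1, lt_of_le_of_lt hy.2 hmem.2⟩
    have mono : StrictMonoOn (fun ρ => ρ * c - lam * H ε ρ) (Set.Icc ρ ρstar) := by
      apply strictMonoOn_of_deriv_pos (convex_Icc _ _) (hcont _ hsub)
      intro y hy
      rw [interior_Icc] at hy
      have hyI : y ∈ Set.Ioo (1 - ε) (1 + ε) := hsub ⟨hy.1.le, hy.2.le⟩
      rw [(hderiv y hyI).deriv]
      have l1 : Real.log (y - 1 + ε) < Real.log (ρstar - 1 + ε) :=
        Real.log_lt_log (by linarith [hyI.1]) (by linarith [hy.2])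
      have l2 : Real.log (1 + ε - ρstar) < Real.log (1 + ε - y) :=
        Real.log_lt_log hBpos (by linarith [hy.2])
      nlinarith [mul_pos hlam (by linarith :
        (0:ℝ) < (Real.log (ρstar - 1 + ε) - Real.log (1 + ε - ρstar)) -
          (Real.log (y - 1 + ε) - Real.log (1 + ε - y)))]
    exact mono ⟨le_refl ρ, hlt.le⟩ ⟨hlt.le, le_refl ρstar⟩ hlt
  · have hsub : Set.Icc ρstar ρ ⊆ Set.Ioo (1 - ε) (1 + ε) := fun y hy =>
      ⟨lt_of_lt_of_le hmem.1 hy.1, lt_of_le_of_lt hy.2 hρm.2⟩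
    have anti : StrictAntiOn (fun ρ => ρ * c - lam * H ε ρ) (Set.Icc ρstar ρ) := by
      apply strictAntiOn_of_deriv_neg (convex_Icc _ _) (hcont _ hsub)
      intro y hy
      rw [interior_Icc] at hy
      have hyI : y ∈ Set.Ioo (1 - ε) (1 + ε) := hsub ⟨hy.1.le, hy.2.le⟩
      rw [(hderiv y hyI).deriv]
      have l1 : Real.log (ρstar - 1 + ε) < Real.log (y - 1 + ε) :=
        Real.log_lt_log hApos (by linarith [hy.1])
      have l2 : Real.log (1 + ε - y) < Real.log (1 + ε - ρstar) :=
        Real.log_lt_log (by linarith [hyI.2]) (by linarith [hy.1])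
      nlinarith [mul_pos hlam (by linarith :
        (0:ℝ) < (Real.log (y - 1 + ε) - Real.log (1 + ε - y)) -
          (Real.log (ρstar - 1 + ε) - Real.log (1 + ε - ρstar)))]
    exact anti ⟨le_refl ρstar, hgt.le⟩ ⟨hgt.le, le_refl ρ⟩ hgt
end

section
/- Let P* be a row-stochastic matrix over S, let V₀, B₁ : S → ℝ with B₁(s) ≥ 0 for all s, let ε > 0, and define r* = (1 − γ·P*) *ᵥ V₀ + ε·B₁ (i.e., r* + γ·P* *ᵥ V₀ = V₀ + ε·B₁). Then the matrix 1 − γ·P* is invertible, the vector V* := (1 − γ·P*)⁻¹ *ᵥ r* satisfies V* = V₀ + ε·((1 − γ·P*)⁻¹ *ᵥ B₁), and for every d : S → ℝ with d(s) ≥ 0 for all s, one has ∑_s d(s)·V*(s) ≥ ∑_s d(s)·V₀(s). (Monotonic performance improvement of the bounded-ratio optimal policy, in matrix form.) -/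
/-!
For a row-stochastic `P` and `0 ≤ γ < 1` the matrix `1 - γ • P` obeys a discrete minimum
principle: if `(1 - γ • P) *ᵥ x ≥ 0`, then at a coordinate `s` where `x` is minimal
`x s ≥ γ * (P *ᵥ x) s ≥ γ * x s`, so `x s ≥ 0`. Applied to `±x` this makes `1 - γ • P`
injective, hence invertible; applied to `(1 - γ • P)⁻¹ *ᵥ B₁` it shows that the correction
term is nonnegative, which gives the improvement over `V₀`.
-/

open Matrix

namespace Matrix

variable {S : Type*} [Fintype S] [DecidableEq S] {P : Matrix S S ℝ} {γ : ℝ}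

theorem nonneg_of_one_sub_smul_mulVec_nonneg (hP : P ∈ rowStochastic ℝ S) (hγ0 : 0 ≤ γ)
    (hγ1 : γ < 1) {x : S → ℝ} (hx : 0 ≤ (1 - γ • P) *ᵥ x) : 0 ≤ x := by
  by_contra hneg
  obtain ⟨t, ht⟩ : ∃ t, x t < 0 := by simpa [Pi.le_def] using hneg
  obtain ⟨s, -, hmin⟩ := Finset.univ.exists_min_image x ⟨t, Finset.mem_univ t⟩
  have hmean : x s ≤ (P *ᵥ x) s :=
    calc x s = ∑ j, P s j * x s := by
          rw [← Finset.sum_mul, sum_row_of_mem_rowStochastic hP, one_mul]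
      _ ≤ ∑ j, P s j * x j := Finset.sum_le_sum fun j hj =>
          mul_le_mul_of_nonneg_left (hmin j hj) (nonneg_of_mem_rowStochastic hP)
  have hs : 0 ≤ x s - γ * (P *ᵥ x) s := by
    simpa [sub_mulVec, smul_mulVec] using hx s
  nlinarith [hmin t (Finset.mem_univ t)]

theorem isUnit_one_sub_smul_of_mem_rowStochastic (hP : P ∈ rowStochastic ℝ S) (hγ0 : 0 ≤ γ)
    (hγ1 : γ < 1) : IsUnit (1 - γ • P) := by
  rw [isUnit_iff_isUnit_det, isUnit_iff_ne_zero, Ne, ← exists_mulVec_eq_zero_iff]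
  rintro ⟨v, hv0, hv⟩
  refine hv0 (le_antisymm ?_ (nonneg_of_one_sub_smul_mulVec_nonneg hP hγ0 hγ1 hv.ge))
  simpa using nonneg_of_one_sub_smul_mulVec_nonneg hP hγ0 hγ1 (x := -v)
    (by rw [mulVec_neg, hv, neg_zero])

theorem inv_one_sub_smul_mulVec_nonneg (hP : P ∈ rowStochastic ℝ S) (hγ0 : 0 ≤ γ)
    (hγ1 : γ < 1) {y : S → ℝ} (hy : 0 ≤ y) : 0 ≤ (1 - γ • P)⁻¹ *ᵥ y := by
  have hdet :=
    (isUnit_iff_isUnit_det _).mp (isUnit_one_sub_smul_of_mem_rowStochastic hP hγ0 hγ1)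
  refine nonneg_of_one_sub_smul_mulVec_nonneg hP hγ0 hγ1 ?_
  rwa [mulVec_mulVec, mul_nonsing_inv _ hdet, one_mulVec]

end Matrix

theorem stmt7_general {S : Type*} [Fintype S] [DecidableEq S]
    (γ : ℝ) (hγ : γ ∈ Set.Ioo (0 : ℝ) 1)
    (Pstar : Matrix S S ℝ)
    (hPnn : ∀ s s', 0 ≤ Pstar s s') (hProw : ∀ s, ∑ s', Pstar s s' = 1)
    (V₀ B₁ : S → ℝ) (hB : ∀ s, 0 ≤ B₁ s) (ε : ℝ) (hε : 0 < ε)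
    (rstar : S → ℝ) (hr : rstar = (1 - γ • Pstar) *ᵥ V₀ + ε • B₁) :
    IsUnit (1 - γ • Pstar) ∧
    (1 - γ • Pstar)⁻¹ *ᵥ rstar = V₀ + ε • ((1 - γ • Pstar)⁻¹ *ᵥ B₁) ∧
    ∀ d : S → ℝ, (∀ s, 0 ≤ d s) →
      ∑ s, d s * V₀ s ≤ ∑ s, d s * ((1 - γ • Pstar)⁻¹ *ᵥ rstar) s := by
  obtain ⟨hγ0, hγ1⟩ := hγ
  have hP : Pstar ∈ rowStochastic ℝ S := mem_rowStochastic_iff_sum.2 ⟨hPnn, hProw⟩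
  have hA := isUnit_one_sub_smul_of_mem_rowStochastic hP hγ0.le hγ1
  have hV : (1 - γ • Pstar)⁻¹ *ᵥ rstar = V₀ + ε • ((1 - γ • Pstar)⁻¹ *ᵥ B₁) := by
    rw [hr, mulVec_add, mulVec_smul, mulVec_mulVec,
      nonsing_inv_mul _ ((isUnit_iff_isUnit_det _).mp hA), one_mulVec]
  refine ⟨hA, hV, fun d hd => Finset.sum_le_sum fun s _ => ?_⟩
  have hcorr := inv_one_sub_smul_mulVec_nonneg hP hγ0.le hγ1 (y := B₁) hB s
  rw [hV]
  exact mul_le_mul_of_nonneg_left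
    (le_add_of_nonneg_right (mul_nonneg hε.le hcorr)) (hd s)

theorem stmt7 {S : Type*} [Fintype S] [Nonempty S] [DecidableEq S]
    (γ : ℝ) (hγ : γ ∈ Set.Ioo (0 : ℝ) 1)
    (Pstar : Matrix S S ℝ)
    (hPnn : ∀ s s', 0 ≤ Pstar s s') (hProw : ∀ s, ∑ s', Pstar s s' = 1)
    (V₀ B₁ : S → ℝ) (hB : ∀ s, 0 ≤ B₁ s) (ε : ℝ) (hε : 0 < ε)
    (rstar : S → ℝ) (hr : rstar = (1 - γ • Pstar) *ᵥ V₀ + ε • B₁) :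
    IsUnit (1 - γ • Pstar) ∧
    (1 - γ • Pstar)⁻¹ *ᵥ rstar = V₀ + ε • ((1 - γ • Pstar)⁻¹ *ᵥ B₁) ∧
    ∀ d : S → ℝ, (∀ s, 0 ≤ d s) →
      ∑ s, d s * V₀ s ≤ ∑ s, d s * ((1 - γ • Pstar)⁻¹ *ᵥ rstar) s :=
  stmt7_general γ hγ Pstar hPnn hProw V₀ B₁ hB ε hε rstar hr
end

section
/- Let μ be a soft-median of q under p at temperature λ and define π*(a) = (1 + ε·tanh((q(a) − μ)/(2λ)))·p(a). Then π* is a probability vector (π*(a) > 0 and ∑_{a∈A} π*(a) = 1) and its total variation distance to p satisfies ∑_{a∈A} |π*(a) − p(a)| < ε. -/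
/-!
Since |tanh| < 1, the tilt factor 1 + ε·tanh(…) lies strictly between 1 - ε and 1 + ε, which gives
positivity and |π* - p| < ε·p pointwise; the soft-median equation says exactly that the tilt has
p-mean zero, so π* still sums to 1.
-/

open Finset

lemma one_add_mul_mul_pos {p w ε : ℝ} (hp : 0 < p) (hw : |w| < 1) (hε : |ε| ≤ 1) :
    0 < (1 + ε * w) * p := by
  have hεw : |ε * w| < 1 := by
    rw [abs_mul]
    exact mul_lt_one_of_nonneg_of_lt_one_right hε (abs_nonneg _) hw
  exact mul_pos (by linarith [neg_abs_le (ε * w)]) hp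

section Tilt

variable {ι : Type*} [Fintype ι] {p w : ι → ℝ} {ε : ℝ}

lemma sum_one_add_mul_mul_eq_one (hpsum : ∑ a, p a = 1) (hw : ∑ a, p a * w a = 0) :
    ∑ a, (1 + ε * w a) * p a = 1 := by
  calc ∑ a, (1 + ε * w a) * p a = ∑ a, p a + ε * ∑ a, p a * w a := by
        rw [mul_sum, ← sum_add_distrib]
        exact sum_congr rfl fun a _ => by ring
    _ = 1 := by rw [hpsum, hw, mul_zero, add_zero]

lemma sum_abs_one_add_mul_mul_sub_lt (hp : ∀ a, 0 < p a) (hpsum : ∑ a, p a = 1)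
    (hw : ∀ a, |w a| < 1) (hε : 0 < ε) :
    ∑ a, |(1 + ε * w a) * p a - p a| < ε := by
  have hne : (univ : Finset ι).Nonempty :=
    nonempty_of_sum_ne_zero (hpsum.symm ▸ one_ne_zero)
  have hlt : ∀ a, |(1 + ε * w a) * p a - p a| < ε * p a := fun a => by
    rw [show (1 + ε * w a) * p a - p a = ε * p a * w a by ring, abs_mul,
      abs_of_pos (mul_pos hε (hp a))]
    exact mul_lt_of_lt_one_right (mul_pos hε (hp a)) (hw a)
  calc ∑ a, |(1 + ε * w a) * p a - p a| < ∑ a, ε * p a :=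
        sum_lt_sum_of_nonempty hne fun a _ => hlt a
    _ = ε := by rw [← mul_sum, hpsum, mul_one]

end Tilt

theorem stmt8_general {A : Type*} [Fintype A]
    (p : A → ℝ) (hp : ∀ a, 0 < p a) (hpsum : ∑ a, p a = 1)
    (q : A → ℝ) (lam : ℝ)
    (ε : ℝ) (hε : ε ∈ Set.Ioo (0 : ℝ) 1)
    (μ : ℝ) (hμ : ∑ a, p a * Real.tanh ((q a - μ) / (2 * lam)) = 0)
    (πstar : A → ℝ)
    (hπ : ∀ a, πstar a = (1 + ε * Real.tanh ((q a - μ) / (2 * lam))) * p a) :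
    (∀ a, 0 < πstar a) ∧ (∑ a, πstar a = 1) ∧
    ∑ a, |πstar a - p a| < ε := by
  obtain ⟨hε0, hε1⟩ := hε
  have htanh : ∀ a, |Real.tanh ((q a - μ) / (2 * lam))| < 1 := fun a => Real.abs_tanh_lt_one _
  simp only [hπ]
  exact ⟨fun a => one_add_mul_mul_pos (hp a) (htanh a) (abs_le.2 ⟨by linarith, hε1.le⟩),
    sum_one_add_mul_mul_eq_one hpsum hμ, sum_abs_one_add_mul_mul_sub_lt hp hpsum htanh hε0⟩

theorem stmt8 {A : Type*} [Fintype A] [Nonempty A]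
    (p : A → ℝ) (hp : ∀ a, 0 < p a) (hpsum : ∑ a, p a = 1)
    (q : A → ℝ) (lam : ℝ) (hlam : 0 < lam)
    (ε : ℝ) (hε : ε ∈ Set.Ioo (0 : ℝ) 1)
    (μ : ℝ) (hμ : ∑ a, p a * Real.tanh ((q a - μ) / (2 * lam)) = 0)
    (πstar : A → ℝ)
    (hπ : ∀ a, πstar a = (1 + ε * Real.tanh ((q a - μ) / (2 * lam))) * p a) :
    (∀ a, 0 < πstar a) ∧ (∑ a, πstar a = 1) ∧
    ∑ a, |πstar a - p a| < ε :=
  stmt8_general p hp hpsum q lam ε hε μ hμ πstar hπ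
end

section
/- Let μ be a soft-median of q under p at temperature λ, set V = ∑_{a∈A} p(a)·q(a), Ã(a) = q(a) − μ, A(a) = q(a) − V, and π*(a) = (1 + ε·tanh(Ã(a)/(2λ)))·p(a). Let π_θ : A → ℝ be any probability vector (π_θ(a) ≥ 0 and ∑_{a∈A} π_θ(a) = 1). Then ∑_{a∈A} π_θ(a)·q(a) ≥ V + ε·∑_{a∈A} p(a)·tanh(Ã(a)/(2λ))·Ã(a) − ∑_{a∈A} |π*(a) − π_θ(a)|·|A(a)|. -/
/-!
Because `μ` is a soft-median, `∑ p a * tanh (Ã a / (2λ)) = 0`. Hence the tilted vector `π*` still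
has total mass one, and its mean reward exceeds `V` by exactly `ε ∑ p a * tanh (Ã a / (2λ)) * Ã a`
(the constant `μ` in `Ã = q - μ` is annihilated by the same identity). Since `πθ` and `π*` have
equal mass, `∑ πθ q - ∑ π* q = ∑ (πθ - π*) * (q - V)`, and each term of this sum is at least
`-|π* a - πθ a| * |q a - V|`.
-/

open Finset

section

variable {ι : Type*} (s : Finset ι)

theorem sum_sub_mul_sub_const_of_sum_eq {x y : ι → ℝ} (hxy : ∑ i ∈ s, x i = ∑ i ∈ s, y i)
    (f : ι → ℝ) (c : ℝ) :
    ∑ i ∈ s, (x i - y i) * (f i - c) = ∑ i ∈ s, x i * f i - ∑ i ∈ s, y i * f i := by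
  have hc : ∑ i ∈ s, (x i - y i) * c = 0 := by
    rw [← sum_mul, sum_sub_distrib, hxy, sub_self, zero_mul]
  simp only [mul_sub, sum_sub_distrib, sub_mul] at hc ⊢
  linarith

theorem neg_sum_abs_sub_mul_abs_le (x y f : ι → ℝ) :
    -∑ i ∈ s, |x i - y i| * |f i| ≤ ∑ i ∈ s, (y i - x i) * f i := by
  rw [← sum_neg_distrib]
  gcongr with i
  rw [abs_sub_comm, ← abs_mul]
  exact neg_abs_le _

variable {p t : ι → ℝ}

theorem sum_one_add_mul_mul_eq_of_sum_mul_eq_zero (hpt : ∑ i ∈ s, p i * t i = 0) (ε : ℝ) :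
    ∑ i ∈ s, (1 + ε * t i) * p i = ∑ i ∈ s, p i := by
  have hε : ∑ i ∈ s, ε * (p i * t i) = 0 := by rw [← mul_sum, hpt, mul_zero]
  rw [← sub_eq_zero, ← sum_sub_distrib, ← hε]
  exact sum_congr rfl fun i _ => by ring

theorem sum_one_add_mul_mul_mul_eq_of_sum_mul_eq_zero (hpt : ∑ i ∈ s, p i * t i = 0) (ε : ℝ)
    (q : ι → ℝ) (μ : ℝ) :
    ∑ i ∈ s, (1 + ε * t i) * p i * q i
      = ∑ i ∈ s, p i * q i + ε * ∑ i ∈ s, p i * t i * (q i - μ) := by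
  have hμ : ∑ i ∈ s, ε * μ * (p i * t i) = 0 := by rw [← mul_sum, hpt, mul_zero]
  rw [mul_sum, ← sum_add_distrib, ← sub_eq_zero, ← sum_sub_distrib, ← hμ]
  exact sum_congr rfl fun i _ => by ring

end

theorem stmt9_general {A : Type*} [Fintype A]
    (p : A → ℝ) (hpsum : ∑ a, p a = 1)
    (q : A → ℝ) (lam : ℝ)
    (ε : ℝ)
    (μ : ℝ) (hμ : ∑ a, p a * Real.tanh ((q a - μ) / (2 * lam)) = 0)
    (V : ℝ) (hV : V = ∑ a, p a * q a)
    (Atil Adv : A → ℝ) (hAt : ∀ a, Atil a = q a - μ) (hAd : ∀ a, Adv a = q a - V)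
    (πstar : A → ℝ)
    (hπ : ∀ a, πstar a = (1 + ε * Real.tanh (Atil a / (2 * lam))) * p a)
    (πθ : A → ℝ) (hθsum : ∑ a, πθ a = 1) :
    V + ε * (∑ a, p a * Real.tanh (Atil a / (2 * lam)) * Atil a)
        - ∑ a, |πstar a - πθ a| * |Adv a|
      ≤ ∑ a, πθ a * q a := by
  obtain rfl : Atil = fun a => q a - μ := funext hAt
  obtain rfl : Adv = fun a => q a - V := funext hAd
  obtain rfl : πstar = _ := funext hπ
  have hmass : ∑ a, πθ a = ∑ a, (1 + ε * Real.tanh ((q a - μ) / (2 * lam))) * p a := by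
    rw [sum_one_add_mul_mul_eq_of_sum_mul_eq_zero _ hμ, hpsum, hθsum]
  have hmean := sum_one_add_mul_mul_mul_eq_of_sum_mul_eq_zero _ hμ ε q μ
  have hgap := sum_sub_mul_sub_const_of_sum_eq _ hmass q V
  have hbound := neg_sum_abs_sub_mul_abs_le univ
    (fun a => (1 + ε * Real.tanh ((q a - μ) / (2 * lam))) * p a) πθ (fun a => q a - V)
  linarith

theorem stmt9 {A : Type*} [Fintype A] [Nonempty A]
    (p : A → ℝ) (hp : ∀ a, 0 < p a) (hpsum : ∑ a, p a = 1)
    (q : A → ℝ) (lam : ℝ) (hlam : 0 < lam)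
    (ε : ℝ) (hε : ε ∈ Set.Ioo (0 : ℝ) 1)
    (μ : ℝ) (hμ : ∑ a, p a * Real.tanh ((q a - μ) / (2 * lam)) = 0)
    (V : ℝ) (hV : V = ∑ a, p a * q a)
    (Atil Adv : A → ℝ) (hAt : ∀ a, Atil a = q a - μ) (hAd : ∀ a, Adv a = q a - V)
    (πstar : A → ℝ)
    (hπ : ∀ a, πstar a = (1 + ε * Real.tanh (Atil a / (2 * lam))) * p a)
    (πθ : A → ℝ) (hθnn : ∀ a, 0 ≤ πθ a) (hθsum : ∑ a, πθ a = 1) :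
    V + ε * (∑ a, p a * Real.tanh (Atil a / (2 * lam)) * Atil a)
        - ∑ a, |πstar a - πθ a| * |Adv a|
      ≤ ∑ a, πθ a * q a :=
  stmt9_general p hpsum q lam ε μ hμ V hV Atil Adv hAt hAd πstar hπ πθ hθsum
end

section
/- Let P₀, P_θ, P* be row-stochastic matrices over S, d : S → ℝ with d(s) ≥ 0 and ∑_s d(s) = 1, ε > 0, and let V₀, r_θ, B₁, Dᴬ, Dᵀ : S → ℝ and constants Dᴬmax, Dᵀmax, δ̃ ≥ 0 satisfy: (i) r_θ ⪰ (1 − γ·P_θ) *ᵥ V₀ + ε·B₁ − Dᴬ entrywise; (ii) 0 ⪯ Dᴬ ⪯ Dᴬmax·𝟏, 0 ⪯ Dᵀ ⪯ Dᵀmax·𝟏, and 0 ⪯ B₁ ⪯ δ̃·𝟏 entrywise; (iii) ∑_{s'} |P_θ(s,s') − P₀(s,s')| ≤ ε + Dᵀ(s) and ∑_{s'} |P_θ(s,s') − P*(s,s')| ≤ Dᵀ(s) for every s. Then, with V_θ := (1 − γ·P_θ)⁻¹ *ᵥ r_θ, one has d ⬝ V_θ ≥ d ⬝ V₀ + ε·(d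 ⬝ ((1 − γ·P*)⁻¹ *ᵥ B₁)) − d ⬝ ((1 − γ·P₀)⁻¹ *ᵥ Dᴬ) − (γ·Dᴬmax/(1−γ))·(d ⬝ ((1 − γ·P₀)⁻¹ *ᵥ Dᵀ)) − γ·ε·Dᴬmax/(1−γ)² − γ·ε·δ̃·Dᵀmax/(1−γ)². (Performance improvement guarantee in terms of the BPO loss functions, in matrix form.) -/
open Matrix

section Helpers

variable {S : Type*} [Fintype S] [Nonempty S] [DecidableEq S]

lemma bpo_expand (γ : ℝ) (P : Matrix S S ℝ) (v : S → ℝ) (s : S) :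
    ((1 - γ • P) *ᵥ v) s = v s - γ * ∑ s', P s s' * v s' := by
  simp only [Matrix.mulVec, dotProduct, Matrix.sub_apply, Matrix.smul_apply,
    smul_eq_mul, sub_mul, Finset.sum_sub_distrib]
  rw [Finset.mul_sum]
  congr 1
  · simp [Matrix.one_apply]
  · exact Finset.sum_congr rfl fun _ _ => by ring

lemma bpo_isUnit (γ : ℝ) (hγ0 : 0 < γ) (hγ1 : γ < 1)
    (P : Matrix S S ℝ) (hPnn : ∀ s s', 0 ≤ P s s') (hProw : ∀ s, ∑ s', P s s' = 1) :
    IsUnit (1 - γ • P) := by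
  rw [← Matrix.mulVec_injective_iff_isUnit]
  intro x y hxy
  have hz : ∀ z : S → ℝ, (1 - γ • P) *ᵥ z = 0 → z = 0 := by
    intro z hzz
    have hz' : ∀ s, z s = γ * ∑ s', P s s' * z s' := by
      intro s
      have := congrFun hzz s
      rw [bpo_expand] at this
      simp at this
      linarith [this]
    by_contra hne
    obtain ⟨s₀, hs₀⟩ := Finset.exists_max_image Finset.univ (fun s => |z s|)
      ⟨Classical.arbitrary S, Finset.mem_univ _⟩
    have hmax : ∀ s', |z s'| ≤ |z s₀| := fun s' => hs₀.2 s' (Finset.mem_univ _)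
    have hpos : 0 < |z s₀| := by
      rcases Function.ne_iff.1 hne with ⟨s, hs⟩
      exact lt_of_lt_of_le (abs_pos.2 hs) (hmax s)
    have hb : |z s₀| ≤ γ * |z s₀| := by
      calc |z s₀| = γ * |∑ s', P s₀ s' * z s'| := by rw [hz' s₀, abs_mul, abs_of_pos hγ0]
        _ ≤ γ * ∑ s', |P s₀ s' * z s'| :=
            mul_le_mul_of_nonneg_left (Finset.abs_sum_le_sum_abs _ _) hγ0.le
        _ ≤ γ * ∑ s', P s₀ s' * |z s₀| := by
            refine mul_le_mul_of_nonneg_left (Finset.sum_le_sum fun s' _ => ?_) hγ0.le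
            rw [abs_mul, abs_of_nonneg (hPnn s₀ s')]
            exact mul_le_mul_of_nonneg_left (hmax s') (hPnn s₀ s')
        _ = γ * |z s₀| := by rw [← Finset.sum_mul, hProw s₀, one_mul]
    nlinarith
  have := hz (x - y) (by rw [Matrix.mulVec_sub, hxy, sub_self])
  exact sub_eq_zero.1 this

lemma bpo_inv_mul (γ : ℝ) (hγ0 : 0 < γ) (hγ1 : γ < 1)
    (P : Matrix S S ℝ) (hPnn : ∀ s s', 0 ≤ P s s') (hProw : ∀ s, ∑ s', P s s' = 1) :
    (1 - γ • P)⁻¹ * (1 - γ • P) = 1 :=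
  Matrix.nonsing_inv_mul _ ((Matrix.isUnit_iff_isUnit_det _).1 (bpo_isUnit γ hγ0 hγ1 P hPnn hProw))

lemma bpo_mul_inv (γ : ℝ) (hγ0 : 0 < γ) (hγ1 : γ < 1)
    (P : Matrix S S ℝ) (hPnn : ∀ s s', 0 ≤ P s s') (hProw : ∀ s, ∑ s', P s s' = 1) :
    (1 - γ • P) * (1 - γ • P)⁻¹ = 1 :=
  Matrix.mul_nonsing_inv _ ((Matrix.isUnit_iff_isUnit_det _).1 (bpo_isUnit γ hγ0 hγ1 P hPnn hProw))

lemma bpo_nonneg (γ : ℝ) (hγ0 : 0 < γ) (hγ1 : γ < 1)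
    (P : Matrix S S ℝ) (hPnn : ∀ s s', 0 ≤ P s s') (hProw : ∀ s, ∑ s', P s s' = 1)
    (b : S → ℝ) (hb : ∀ s, 0 ≤ b s) :
    ∀ s, 0 ≤ ((1 - γ • P)⁻¹ *ᵥ b) s := by
  set x := (1 - γ • P)⁻¹ *ᵥ b with hx
  have hAx : (1 - γ • P) *ᵥ x = b := by
    rw [hx, Matrix.mulVec_mulVec, bpo_mul_inv γ hγ0 hγ1 P hPnn hProw, Matrix.one_mulVec]
  have hx' : ∀ s, x s = b s + γ * ∑ s', P s s' * x s' := by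
    intro s
    have := congrFun hAx s
    rw [bpo_expand] at this
    linarith [this]
  obtain ⟨s₀, hs₀⟩ := Finset.exists_min_image Finset.univ x ⟨Classical.arbitrary S, Finset.mem_univ _⟩
  have hmin : ∀ s', x s₀ ≤ x s' := fun s' => hs₀.2 s' (Finset.mem_univ _)
  have hkey : x s₀ ≥ b s₀ + γ * x s₀ := by
    have : γ * ∑ s', P s₀ s' * x s' ≥ γ * ∑ s', P s₀ s' * x s₀ := by
      refine mul_le_mul_of_nonneg_left (Finset.sum_le_sum fun s' _ => ?_) hγ0.le
      exact mul_le_mul_of_nonneg_left (hmin s') (hPnn s₀ s')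
    rw [← Finset.sum_mul, hProw s₀, one_mul] at this
    linarith [hx' s₀]
  have h0 : 0 ≤ x s₀ := by nlinarith [hb s₀]
  exact fun s => le_trans h0 (hmin s)

lemma bpo_const (γ : ℝ) (hγ0 : 0 < γ) (hγ1 : γ < 1)
    (P : Matrix S S ℝ) (hPnn : ∀ s s', 0 ≤ P s s') (hProw : ∀ s, ∑ s', P s s' = 1)
    (c : ℝ) : (1 - γ • P)⁻¹ *ᵥ (fun _ => c) = fun _ => c / (1 - γ) := by
  have h1γ : (0:ℝ) < 1 - γ := by linarith
  have key : (1 - γ • P) *ᵥ (fun _ => c / (1 - γ)) = fun _ => c := by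
    funext s
    rw [bpo_expand]
    have : (∑ s', P s s' * (c / (1-γ))) = c / (1-γ) := by
      rw [← Finset.sum_mul, hProw s, one_mul]
    rw [this]
    field_simp
  calc (1 - γ • P)⁻¹ *ᵥ (fun _ => c)
      = (1 - γ • P)⁻¹ *ᵥ ((1 - γ • P) *ᵥ (fun _ => c / (1 - γ))) := by rw [key]
    _ = ((1 - γ • P)⁻¹ * (1 - γ • P)) *ᵥ (fun _ => c / (1 - γ)) := Matrix.mulVec_mulVec _ _ _
    _ = fun _ => c / (1 - γ) := by rw [bpo_inv_mul γ hγ0 hγ1 P hPnn hProw, Matrix.one_mulVec]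

lemma bpo_mono (γ : ℝ) (hγ0 : 0 < γ) (hγ1 : γ < 1)
    (P : Matrix S S ℝ) (hPnn : ∀ s s', 0 ≤ P s s') (hProw : ∀ s, ∑ s', P s s' = 1)
    (v w : S → ℝ) (hvw : ∀ s, v s ≤ w s) :
    ∀ s, ((1 - γ • P)⁻¹ *ᵥ v) s ≤ ((1 - γ • P)⁻¹ *ᵥ w) s := by
  intro s
  have := bpo_nonneg γ hγ0 hγ1 P hPnn hProw (w - v) (fun s => by simpa using hvw s) s
  rw [Matrix.mulVec_sub] at this
  simpa using this

lemma bpo_bounds (γ : ℝ) (hγ0 : 0 < γ) (hγ1 : γ < 1)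
    (P : Matrix S S ℝ) (hPnn : ∀ s s', 0 ≤ P s s') (hProw : ∀ s, ∑ s', P s s' = 1)
    (b : S → ℝ) (c : ℝ) (hb : ∀ s, 0 ≤ b s ∧ b s ≤ c) :
    ∀ s, 0 ≤ ((1 - γ • P)⁻¹ *ᵥ b) s ∧ ((1 - γ • P)⁻¹ *ᵥ b) s ≤ c / (1 - γ) := by
  intro s
  refine ⟨bpo_nonneg γ hγ0 hγ1 P hPnn hProw b (fun s => (hb s).1) s, ?_⟩
  have := bpo_mono γ hγ0 hγ1 P hPnn hProw b (fun _ => c) (fun s => (hb s).2) s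
  rwa [bpo_const γ hγ0 hγ1 P hPnn hProw c] at this

end Helpers
theorem stmt11 {S : Type*} [Fintype S] [Nonempty S] [DecidableEq S]
    (γ : ℝ) (hγ : γ ∈ Set.Ioo (0 : ℝ) 1)
    (P₀ Pθ Pstar : Matrix S S ℝ)
    (hP₀nn : ∀ s s', 0 ≤ P₀ s s') (hP₀row : ∀ s, ∑ s', P₀ s s' = 1)
    (hPθnn : ∀ s s', 0 ≤ Pθ s s') (hPθrow : ∀ s, ∑ s', Pθ s s' = 1)
    (hPsnn : ∀ s s', 0 ≤ Pstar s s') (hPsrow : ∀ s, ∑ s', Pstar s s' = 1)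
    (d : S → ℝ) (hd : ∀ s, 0 ≤ d s) (hdsum : ∑ s, d s = 1)
    (ε : ℝ) (hε : 0 < ε)
    (V₀ rθ B₁ DA DT : S → ℝ) (DAmax DTmax δ : ℝ)
    (hDAmax : 0 ≤ DAmax) (hDTmax : 0 ≤ DTmax) (hδ : 0 ≤ δ)
    (h1 : ∀ s, ((1 - γ • Pθ) *ᵥ V₀) s + ε * B₁ s - DA s ≤ rθ s)
    (h2 : ∀ s, 0 ≤ DA s ∧ DA s ≤ DAmax)
    (h3 : ∀ s, 0 ≤ DT s ∧ DT s ≤ DTmax)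
    (h4 : ∀ s, 0 ≤ B₁ s ∧ B₁ s ≤ δ)
    (h5 : ∀ s, ∑ s', |Pθ s s' - P₀ s s'| ≤ ε + DT s)
    (h6 : ∀ s, ∑ s', |Pθ s s' - Pstar s s'| ≤ DT s)
    (Vθ : S → ℝ) (hVθ : Vθ = (1 - γ • Pθ)⁻¹ *ᵥ rθ) :
    ∑ s, d s * V₀ s
      + ε * (∑ s, d s * ((1 - γ • Pstar)⁻¹ *ᵥ B₁) s)
      - ∑ s, d s * ((1 - γ • P₀)⁻¹ *ᵥ DA) s
      - (γ * DAmax / (1 - γ)) * (∑ s, d s * ((1 - γ • P₀)⁻¹ *ᵥ DT) s)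
      - γ * ε * DAmax / (1 - γ) ^ 2
      - γ * ε * δ * DTmax / (1 - γ) ^ 2
    ≤ ∑ s, d s * Vθ s := by
  obtain ⟨hγ0, hγ1⟩ := hγ
  have h1γ : (0:ℝ) < 1 - γ := by linarith
  -- inverse identities
  have iv₀ : (1 - γ • P₀)⁻¹ * (1 - γ • P₀) = 1 := bpo_inv_mul γ hγ0 hγ1 P₀ hP₀nn hP₀row
  have vi₀ : (1 - γ • P₀) * (1 - γ • P₀)⁻¹ = 1 := bpo_mul_inv γ hγ0 hγ1 P₀ hP₀nn hP₀row
  have ivθ : (1 - γ • Pθ)⁻¹ * (1 - γ • Pθ) = 1 := bpo_inv_mul γ hγ0 hγ1 Pθ hPθnn hPθrow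
  have viθ : (1 - γ • Pθ) * (1 - γ • Pθ)⁻¹ = 1 := bpo_mul_inv γ hγ0 hγ1 Pθ hPθnn hPθrow
  have ivs : (1 - γ • Pstar)⁻¹ * (1 - γ • Pstar) = 1 := bpo_inv_mul γ hγ0 hγ1 Pstar hPsnn hPsrow
  have vis : (1 - γ • Pstar) * (1 - γ • Pstar)⁻¹ = 1 := bpo_mul_inv γ hγ0 hγ1 Pstar hPsnn hPsrow
  have dot_mono : ∀ v w : S → ℝ, (∀ s, v s ≤ w s) →
      ∑ s, d s * v s ≤ ∑ s, d s * w s :=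
    fun v w h => Finset.sum_le_sum fun s _ => mul_le_mul_of_nonneg_left (h s) (hd s)
  set C : ℝ := DAmax / (1 - γ) with hC
  set C' : ℝ := δ / (1 - γ) with hC'
  have hCnn : 0 ≤ C := div_nonneg hDAmax h1γ.le
  have hC'nn : 0 ≤ C' := div_nonneg hδ h1γ.le
  -- Step 1 : Vθ ≥ V₀ + Mθ (ε B₁ - DA) entrywise
  have e1 : (1 - γ • Pθ)⁻¹ *ᵥ (rθ - (1 - γ • Pθ) *ᵥ V₀) = Vθ - V₀ := by
    rw [Matrix.mulVec_sub, Matrix.mulVec_mulVec, ivθ, Matrix.one_mulVec, hVθ]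
  have step1 : ∀ s, ((1 - γ • Pθ)⁻¹ *ᵥ (fun t => ε * B₁ t - DA t)) s + V₀ s ≤ Vθ s := by
    intro s
    have hmono := bpo_mono γ hγ0 hγ1 Pθ hPθnn hPθrow (fun t => ε * B₁ t - DA t)
      (rθ - (1 - γ • Pθ) *ᵥ V₀) (fun t => by have := h1 t; simp [Pi.sub_apply]; linarith) s
    rw [e1] at hmono
    simp only [Pi.sub_apply] at hmono
    linarith
  -- decompose Mθ (ε B₁ - DA)
  have edec : (1 - γ • Pθ)⁻¹ *ᵥ (fun t => ε * B₁ t - DA t)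
      = ε • ((1 - γ • Pθ)⁻¹ *ᵥ B₁) - (1 - γ • Pθ)⁻¹ *ᵥ DA := by
    have : (fun t => ε * B₁ t - DA t) = ε • B₁ - DA := by
      funext t; simp [Pi.sub_apply, Pi.smul_apply]
    rw [this, Matrix.mulVec_sub, Matrix.mulVec_smul]
  -- bounds on Mθ DA and Ms B₁
  have hyA := bpo_bounds γ hγ0 hγ1 Pθ hPθnn hPθrow DA DAmax h2
  have hyB := bpo_bounds γ hγ0 hγ1 Pstar hPsnn hPsrow B₁ δ h4
  -- Step B : Mθ DA ≤ M₀ DA + γ(εC/(1-γ) + C·(M₀ DT)) entrywise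
  have simB : (1 - γ • Pθ)⁻¹ *ᵥ DA - (1 - γ • P₀)⁻¹ *ᵥ DA
      = γ • ((1 - γ • P₀)⁻¹ *ᵥ ((Pθ - P₀) *ᵥ ((1 - γ • Pθ)⁻¹ *ᵥ DA))) := by
    have hm : (1 - γ • Pθ)⁻¹ - (1 - γ • P₀)⁻¹
        = γ • ((1 - γ • P₀)⁻¹ * ((Pθ - P₀) * (1 - γ • Pθ)⁻¹)) := by
      have key : (1 - γ • P₀) * (1 - γ • Pθ)⁻¹ - (1 - γ • Pθ) * (1 - γ • Pθ)⁻¹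
          = (γ • (Pθ - P₀)) * (1 - γ • Pθ)⁻¹ := by
        rw [← Matrix.sub_mul]
        congr 1
        ext i j
        simp [Matrix.sub_apply, Matrix.smul_apply]
        ring
      calc (1 - γ • Pθ)⁻¹ - (1 - γ • P₀)⁻¹
          = ((1 - γ • P₀)⁻¹ * (1 - γ • P₀)) * (1 - γ • Pθ)⁻¹
            - (1 - γ • P₀)⁻¹ * ((1 - γ • Pθ) * (1 - γ • Pθ)⁻¹) := by
            rw [iv₀, viθ, one_mul, mul_one]
        _ = (1 - γ • P₀)⁻¹ * ((1 - γ • P₀) * (1 - γ • Pθ)⁻¹ - (1 - γ • Pθ) * (1 - γ • Pθ)⁻¹) := by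
            rw [Matrix.mul_assoc]; exact (Matrix.mul_sub _ _ _).symm
        _ = (1 - γ • P₀)⁻¹ * ((γ • (Pθ - P₀)) * (1 - γ • Pθ)⁻¹) := by rw [key]
        _ = γ • ((1 - γ • P₀)⁻¹ * ((Pθ - P₀) * (1 - γ • Pθ)⁻¹)) := by
            rw [Matrix.smul_mul, Matrix.mul_smul]
    calc (1 - γ • Pθ)⁻¹ *ᵥ DA - (1 - γ • P₀)⁻¹ *ᵥ DA
        = ((1 - γ • Pθ)⁻¹ - (1 - γ • P₀)⁻¹) *ᵥ DA := (Matrix.sub_mulVec _ _ _).symm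
      _ = (γ • ((1 - γ • P₀)⁻¹ * ((Pθ - P₀) * (1 - γ • Pθ)⁻¹))) *ᵥ DA := by rw [hm]
      _ = γ • ((1 - γ • P₀)⁻¹ *ᵥ ((Pθ - P₀) *ᵥ ((1 - γ • Pθ)⁻¹ *ᵥ DA))) := by
          rw [Matrix.smul_mulVec, Matrix.mulVec_mulVec, Matrix.mulVec_mulVec,
            Matrix.mul_assoc]
  have huA : ∀ s, ((Pθ - P₀) *ᵥ ((1 - γ • Pθ)⁻¹ *ᵥ DA)) s ≤ (ε + DT s) * C := by
    intro s
    have hrep : ((Pθ - P₀) *ᵥ ((1 - γ • Pθ)⁻¹ *ᵥ DA)) s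
        = ∑ s', (Pθ s s' - P₀ s s') * ((1 - γ • Pθ)⁻¹ *ᵥ DA) s' := by
      simp [Matrix.mulVec, dotProduct, Matrix.sub_apply]
    rw [hrep]
    calc ∑ s', (Pθ s s' - P₀ s s') * ((1 - γ • Pθ)⁻¹ *ᵥ DA) s'
        ≤ ∑ s', |Pθ s s' - P₀ s s'| * C := by
          refine Finset.sum_le_sum fun s' _ => ?_
          obtain ⟨h0, hc⟩ := hyA s'
          rcases le_or_gt 0 (Pθ s s' - P₀ s s') with h | h
          · rw [abs_of_nonneg h]; exact mul_le_mul_of_nonneg_left hc h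
          · calc (Pθ s s' - P₀ s s') * ((1 - γ • Pθ)⁻¹ *ᵥ DA) s' ≤ 0 :=
                mul_nonpos_of_nonpos_of_nonneg h.le h0
              _ ≤ |Pθ s s' - P₀ s s'| * C := mul_nonneg (abs_nonneg _) hCnn
      _ = (∑ s', |Pθ s s' - P₀ s s'|) * C := (Finset.sum_mul _ _ _).symm
      _ ≤ (ε + DT s) * C := mul_le_mul_of_nonneg_right (h5 s) hCnn
  have stepB : ∀ s, ((1 - γ • Pθ)⁻¹ *ᵥ DA) s
      ≤ ((1 - γ • P₀)⁻¹ *ᵥ DA) s + γ * (ε * C / (1 - γ) + C * ((1 - γ • P₀)⁻¹ *ᵥ DT) s) := by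
    intro s
    have hmono := bpo_mono γ hγ0 hγ1 P₀ hP₀nn hP₀row
      ((Pθ - P₀) *ᵥ ((1 - γ • Pθ)⁻¹ *ᵥ DA)) (fun t => (ε + DT t) * C) huA s
    have hrhs : (1 - γ • P₀)⁻¹ *ᵥ (fun t => (ε + DT t) * C)
        = (fun _ => ε * C / (1 - γ)) + C • ((1 - γ • P₀)⁻¹ *ᵥ DT) := by
      have hdec : (fun t => (ε + DT t) * C) = (fun _ : S => ε * C) + C • DT := by
        funext t; simp [Pi.add_apply, Pi.smul_apply]; ring
      rw [hdec, Matrix.mulVec_add, Matrix.mulVec_smul,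
        bpo_const γ hγ0 hγ1 P₀ hP₀nn hP₀row (ε * C)]
    rw [hrhs] at hmono
    have hsb := congrFun simB s
    simp only [Pi.sub_apply, Pi.smul_apply, Pi.add_apply, smul_eq_mul] at hsb hmono
    nlinarith [hmono, hsb]
  -- Step C : Ms B₁ ≤ Mθ B₁ + γ·DTmax·C'/(1-γ) entrywise
  have simC : (1 - γ • Pstar)⁻¹ *ᵥ B₁ - (1 - γ • Pθ)⁻¹ *ᵥ B₁
      = γ • ((1 - γ • Pθ)⁻¹ *ᵥ ((Pstar - Pθ) *ᵥ ((1 - γ • Pstar)⁻¹ *ᵥ B₁))) := by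
    have hm : (1 - γ • Pstar)⁻¹ - (1 - γ • Pθ)⁻¹
        = γ • ((1 - γ • Pθ)⁻¹ * ((Pstar - Pθ) * (1 - γ • Pstar)⁻¹)) := by
      have key : (1 - γ • Pθ) * (1 - γ • Pstar)⁻¹ - (1 - γ • Pstar) * (1 - γ • Pstar)⁻¹
          = (γ • (Pstar - Pθ)) * (1 - γ • Pstar)⁻¹ := by
        rw [← Matrix.sub_mul]
        congr 1
        ext i j
        simp [Matrix.sub_apply, Matrix.smul_apply]
        ring
      calc (1 - γ • Pstar)⁻¹ - (1 - γ • Pθ)⁻¹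
          = ((1 - γ • Pθ)⁻¹ * (1 - γ • Pθ)) * (1 - γ • Pstar)⁻¹
            - (1 - γ • Pθ)⁻¹ * ((1 - γ • Pstar) * (1 - γ • Pstar)⁻¹) := by
            rw [ivθ, vis, one_mul, mul_one]
        _ = (1 - γ • Pθ)⁻¹ * ((1 - γ • Pθ) * (1 - γ • Pstar)⁻¹ - (1 - γ • Pstar) * (1 - γ • Pstar)⁻¹) := by
            rw [Matrix.mul_assoc]; exact (Matrix.mul_sub _ _ _).symm
        _ = (1 - γ • Pθ)⁻¹ * ((γ • (Pstar - Pθ)) * (1 - γ • Pstar)⁻¹) := by rw [key]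
        _ = γ • ((1 - γ • Pθ)⁻¹ * ((Pstar - Pθ) * (1 - γ • Pstar)⁻¹)) := by
            rw [Matrix.smul_mul, Matrix.mul_smul]
    calc (1 - γ • Pstar)⁻¹ *ᵥ B₁ - (1 - γ • Pθ)⁻¹ *ᵥ B₁
        = ((1 - γ • Pstar)⁻¹ - (1 - γ • Pθ)⁻¹) *ᵥ B₁ := (Matrix.sub_mulVec _ _ _).symm
      _ = (γ • ((1 - γ • Pθ)⁻¹ * ((Pstar - Pθ) * (1 - γ • Pstar)⁻¹))) *ᵥ B₁ := by rw [hm]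
      _ = γ • ((1 - γ • Pθ)⁻¹ *ᵥ ((Pstar - Pθ) *ᵥ ((1 - γ • Pstar)⁻¹ *ᵥ B₁))) := by
          rw [Matrix.smul_mulVec, Matrix.mulVec_mulVec, Matrix.mulVec_mulVec,
            Matrix.mul_assoc]
  have huB : ∀ s, ((Pstar - Pθ) *ᵥ ((1 - γ • Pstar)⁻¹ *ᵥ B₁)) s ≤ DTmax * C' := by
    intro s
    have hrep : ((Pstar - Pθ) *ᵥ ((1 - γ • Pstar)⁻¹ *ᵥ B₁)) s
        = ∑ s', (Pstar s s' - Pθ s s') * ((1 - γ • Pstar)⁻¹ *ᵥ B₁) s' := by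
      simp [Matrix.mulVec, dotProduct, Matrix.sub_apply]
    rw [hrep]
    calc ∑ s', (Pstar s s' - Pθ s s') * ((1 - γ • Pstar)⁻¹ *ᵥ B₁) s'
        ≤ ∑ s', |Pθ s s' - Pstar s s'| * C' := by
          refine Finset.sum_le_sum fun s' _ => ?_
          obtain ⟨h0, hc⟩ := hyB s'
          rw [abs_sub_comm]
          rcases le_or_gt 0 (Pstar s s' - Pθ s s') with h | h
          · rw [abs_of_nonneg h]; exact mul_le_mul_of_nonneg_left hc h
          · calc (Pstar s s' - Pθ s s') * ((1 - γ • Pstar)⁻¹ *ᵥ B₁) s' ≤ 0 :=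
                mul_nonpos_of_nonpos_of_nonneg h.le h0
              _ ≤ |Pstar s s' - Pθ s s'| * C' := mul_nonneg (abs_nonneg _) hC'nn
      _ = (∑ s', |Pθ s s' - Pstar s s'|) * C' := (Finset.sum_mul _ _ _).symm
      _ ≤ DT s * C' := mul_le_mul_of_nonneg_right (h6 s) hC'nn
      _ ≤ DTmax * C' := mul_le_mul_of_nonneg_right (h3 s).2 hC'nn
  have stepC : ∀ s, ((1 - γ • Pstar)⁻¹ *ᵥ B₁) s
      ≤ ((1 - γ • Pθ)⁻¹ *ᵥ B₁) s + γ * (DTmax * C' / (1 - γ)) := by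
    intro s
    have hmono := bpo_mono γ hγ0 hγ1 Pθ hPθnn hPθrow
      ((Pstar - Pθ) *ᵥ ((1 - γ • Pstar)⁻¹ *ᵥ B₁)) (fun _ => DTmax * C') huB s
    rw [bpo_const γ hγ0 hγ1 Pθ hPθnn hPθrow (DTmax * C')] at hmono
    have hsc := congrFun simC s
    simp only [Pi.sub_apply, Pi.smul_apply, smul_eq_mul] at hsc hmono
    nlinarith [hmono, hsc]
  -- Dot products
  have dotV : ∑ s, d s * V₀ s + (ε * (∑ s, d s * ((1 - γ • Pθ)⁻¹ *ᵥ B₁) s)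
      - ∑ s, d s * ((1 - γ • Pθ)⁻¹ *ᵥ DA) s) ≤ ∑ s, d s * Vθ s := by
    have := dot_mono (fun s => ((1 - γ • Pθ)⁻¹ *ᵥ (fun t => ε * B₁ t - DA t)) s + V₀ s) Vθ step1
    calc ∑ s, d s * V₀ s + (ε * (∑ s, d s * ((1 - γ • Pθ)⁻¹ *ᵥ B₁) s)
          - ∑ s, d s * ((1 - γ • Pθ)⁻¹ *ᵥ DA) s)
        = ∑ s, d s * (((1 - γ • Pθ)⁻¹ *ᵥ (fun t => ε * B₁ t - DA t)) s + V₀ s) := by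
          rw [edec, Finset.mul_sum, ← Finset.sum_sub_distrib, ← Finset.sum_add_distrib]
          refine Finset.sum_congr rfl fun s _ => ?_
          simp only [Pi.sub_apply, Pi.smul_apply, smul_eq_mul]
          ring
      _ ≤ ∑ s, d s * Vθ s := this
  have dotB : ∑ s, d s * ((1 - γ • Pθ)⁻¹ *ᵥ DA) s
      ≤ ∑ s, d s * ((1 - γ • P₀)⁻¹ *ᵥ DA) s + γ * (ε * C / (1 - γ))
        + γ * C * (∑ s, d s * ((1 - γ • P₀)⁻¹ *ᵥ DT) s) := by
    have := dot_mono _ _ stepB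
    calc ∑ s, d s * ((1 - γ • Pθ)⁻¹ *ᵥ DA) s
        ≤ ∑ s, d s * (((1 - γ • P₀)⁻¹ *ᵥ DA) s
            + γ * (ε * C / (1 - γ) + C * ((1 - γ • P₀)⁻¹ *ᵥ DT) s)) := this
      _ = ∑ s, (d s * ((1 - γ • P₀)⁻¹ *ᵥ DA) s + ((γ * (ε * C / (1 - γ))) * d s
          + (γ * C) * (d s * ((1 - γ • P₀)⁻¹ *ᵥ DT) s))) :=
          Finset.sum_congr rfl fun s _ => by ring
      _ = ∑ s, d s * ((1 - γ • P₀)⁻¹ *ᵥ DA) s + ((γ * (ε * C / (1 - γ))) * ∑ s, d s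
          + (γ * C) * ∑ s, d s * ((1 - γ • P₀)⁻¹ *ᵥ DT) s) := by
          rw [Finset.sum_add_distrib, Finset.sum_add_distrib, ← Finset.mul_sum, ← Finset.mul_sum]
      _ = _ := by rw [hdsum]; ring
  have dotC : ∑ s, d s * ((1 - γ • Pstar)⁻¹ *ᵥ B₁) s
      ≤ ∑ s, d s * ((1 - γ • Pθ)⁻¹ *ᵥ B₁) s + γ * (DTmax * C' / (1 - γ)) := by
    have := dot_mono _ _ stepC
    calc ∑ s, d s * ((1 - γ • Pstar)⁻¹ *ᵥ B₁) s
        ≤ ∑ s, d s * (((1 - γ • Pθ)⁻¹ *ᵥ B₁) s + γ * (DTmax * C' / (1 - γ))) := this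
      _ = ∑ s, (d s * ((1 - γ • Pθ)⁻¹ *ᵥ B₁) s + (γ * (DTmax * C' / (1 - γ))) * d s) :=
          Finset.sum_congr rfl fun s _ => by ring
      _ = ∑ s, d s * ((1 - γ • Pθ)⁻¹ *ᵥ B₁) s + (γ * (DTmax * C' / (1 - γ))) * ∑ s, d s := by
          rw [Finset.sum_add_distrib, ← Finset.mul_sum]
      _ = _ := by rw [hdsum]; ring
  -- constants
  have hc1 : γ * (ε * C / (1 - γ)) = γ * ε * DAmax / (1 - γ) ^ 2 := by
    rw [hC]; field_simp
  have hc2 : ε * (γ * (DTmax * C' / (1 - γ))) = γ * ε * δ * DTmax / (1 - γ) ^ 2 := by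
    rw [hC']; field_simp
  have hc3 : γ * C = γ * DAmax / (1 - γ) := by rw [hC]; ring
  have dotCε := mul_le_mul_of_nonneg_left dotC hε.le
  rw [mul_add, hc2] at dotCε
  rw [hc1] at dotB
  rw [hc3] at dotB
  linarith [dotV, dotB, dotCε]
end

section
/- For all real numbers A, ρ and every ε ∈ (0,1), the clipped PPO loss satisfies the pointwise identity −min(ρ·A, clip(ρ, 1−ε, 1+ε)·A) = l'(ρ) − (1 + ε·sgn(A))·A, where l'(ρ) = |A|·|ρ − (1 + ε·sgn(A))| if (ρ − (1 + ε·sgn(A)))·A ≤ 0 and l'(ρ) = 0 otherwise. In particular, the negative PPO surrogate objective differs from the advantage-weighted one-sided absolute-error loss l' by a quantity independent of ρ, so optimizing the PPO objective over ρ is equivalent to minimizing l'. -/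
/-!
On the side where the advantage points (`ρ` above `1` when `A > 0`, below `1` when `A < 0`) the
clip only caps `ρ` at the boundary `c = 1 + ε · sgn A`, and on the other side the outer `min`
discards the clipped term. Hence the surrogate is `min (ρ A) (c A)`, whose negative is the
one-sided loss `|A| |ρ - c|` on `(ρ - c) A ≤ 0` shifted by the constant `-c A`.
-/

lemma min_max_min_self_of_le {α : Type*} [LinearOrder α] {a b : α} (hab : a ≤ b) (x : α) :
    min x (max a (min b x)) = min x b := by
  rcases le_total x b with hxb | hbx
  · rw [min_eq_right hxb, min_eq_left hxb, min_eq_left (le_max_right a x)]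
  · rw [min_eq_left hbx, max_eq_right hab]

lemma max_max_min_self_of_le {α : Type*} [LinearOrder α] {a b : α} (hab : a ≤ b) (x : α) :
    max x (max a (min b x)) = max x a := by
  rcases le_total x b with hxb | hbx
  · rw [min_eq_right hxb, max_comm a x, ← max_assoc, max_self]
  · rw [min_eq_left hbx, max_eq_right hab, max_eq_left hbx, max_eq_left (hab.trans hbx)]

lemma min_mul_clip_eq_min_mul_sign {A ρ ε : ℝ} (hε : 0 ≤ ε) :
    min (ρ * A) (max (1 - ε) (min (1 + ε) ρ) * A) = min (ρ * A) ((1 + ε * Real.sign A) * A) := by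
  have hab : 1 - ε ≤ 1 + ε := by linarith
  rcases lt_trichotomy A 0 with hA | rfl | hA
  · have hanti : Antitone (· * A) := antitone_mul_right hA.le
    rw [Real.sign_of_neg hA, ← hanti.map_max, max_max_min_self_of_le hab, hanti.map_max,
      mul_neg_one, ← sub_eq_add_neg]
  · simp
  · rw [Real.sign_of_pos hA, ← min_mul_of_nonneg _ _ hA.le, min_max_min_self_of_le hab,
      min_mul_of_nonneg _ _ hA.le, mul_one]

lemma neg_min_mul_eq (A ρ c : ℝ) :
    -min (ρ * A) (c * A) = (if (ρ - c) * A ≤ 0 then |A| * |ρ - c| else 0) - c * A := by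
  split_ifs with h
  · rw [min_eq_left (by linarith [sub_mul ρ c A]), ← abs_mul, mul_comm A,
      abs_of_nonpos h]
    ring
  · rw [min_eq_right (by linarith [sub_mul ρ c A])]
    ring

theorem stmt12 (A ρ ε : ℝ) (hε : ε ∈ Set.Ioo (0 : ℝ) 1) :
    -(min (ρ * A) (max (1 - ε) (min (1 + ε) ρ) * A)) =
      (if (ρ - (1 + ε * Real.sign A)) * A ≤ 0
        then |A| * |ρ - (1 + ε * Real.sign A)|
        else 0)
      - (1 + ε * Real.sign A) * A := by
  rw [min_mul_clip_eq_min_mul_sign hε.1.le, neg_min_mul_eq]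
end

section
/- Let μ ∈ ℝ satisfy the normalization condition ∑_{a∈A} p(a)·ρ*_μ(a) = 1, where ρ*_μ(a) = c_l + (c_h − c_l)/(1 + b·exp(−(q(a) − μ)/λ)). Then (i) c_l < ρ*_μ(a) < c_h for every a; and (ii) for every ρ : A → ℝ satisfying c_l < ρ(a) < c_h for all a and ∑_{a∈A} p(a)·ρ(a) = 1, one has ∑_{a∈A} p(a)·(ρ(a)·q(a) − λ·H'(ρ(a))) ≤ ∑_{a∈A} p(a)·(ρ*_μ(a)·q(a) − λ·H'(ρ*_μ(a))). That is, ρ*_μ is the maximizer of the regularized linear objective over the asymmetric bounded-ratio simplex. -/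
/-!
Adding `μ · (1 - ∑ p ρ)` to the objective removes the constraint, and the resulting Lagrangian
splits into independent one-variable problems `ρ ↦ ρ q - λ H'(ρ) - μ ρ`. Each of these is concave,
being built from `x log x`, and `ρ*_μ(a)` is exactly its critical point: solving
`q - μ = λ (log (ρ - c_l) - log (c_h - ρ) + log b)` for `ρ` gives the logistic formula.
A critical point of a concave function is a maximum, and the constraint makes the
multiplier terms on both sides equal.
-/

noncomputable def H' (cl ch ρ : ℝ) : ℝ :=
  (ρ - cl) * Real.log (ρ - cl) + (ch - ρ) * Real.log (ch - ρ) +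
    ρ * Real.log ((ch - 1) / (1 - cl))

open Real Finset

noncomputable def derivH' (cl ch ρ : ℝ) : ℝ :=
  log (ρ - cl) - log (ch - ρ) + log ((ch - 1) / (1 - cl))

lemma mul_log_add_sub_mul_le_mul_log {x y : ℝ} (hx : 0 ≤ x) (hy : 0 < y) :
    y * log y + (x - y) * (log y + 1) ≤ x * log x := by
  rcases hx.eq_or_lt with rfl | hx
  · nlinarith
  have h := log_le_sub_one_of_pos (div_pos hy hx)
  rw [log_div hy.ne' hx.ne', le_sub_iff_add_le, ← mul_le_mul_iff_of_pos_left hx,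
    mul_div_cancel₀ _ hx.ne'] at h
  nlinarith

lemma H'_add_sub_mul_derivH'_le {cl ch x y : ℝ} (hx : x ∈ Set.Icc cl ch)
    (hy : y ∈ Set.Ioo cl ch) :
    H' cl ch y + (x - y) * derivH' cl ch y ≤ H' cl ch x := by
  have hl := mul_log_add_sub_mul_le_mul_log (sub_nonneg.2 hx.1) (sub_pos.2 hy.1)
  have hr := mul_log_add_sub_mul_le_mul_log (sub_nonneg.2 hx.2) (sub_pos.2 hy.2)
  unfold H' derivH'
  linarith

/-- The logistic profile `ρ*` of the statement, with `s = -(q - μ) / λ`. -/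
noncomputable def logistic (cl ch b s : ℝ) : ℝ :=
  cl + (ch - cl) / (1 + b * exp s)

lemma logistic_mem_Ioo {cl ch b : ℝ} (hclch : cl < ch) (hb : 0 < b) (s : ℝ) :
    logistic cl ch b s ∈ Set.Ioo cl ch := by
  have hden : 1 < 1 + b * exp s := lt_add_of_pos_right 1 (by positivity)
  have hquot : (ch - cl) / (1 + b * exp s) < ch - cl :=
    div_lt_self (sub_pos.2 hclch) hden
  have : 0 < (ch - cl) / (1 + b * exp s) := div_pos (sub_pos.2 hclch) (by linarith)
  constructor <;> unfold logistic <;> linarith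

lemma derivH'_logistic {cl ch : ℝ} (hcl : cl < 1) (hch : 1 < ch) (s : ℝ) :
    derivH' cl ch (logistic cl ch ((ch - 1) / (1 - cl)) s) = -s := by
  set b := (ch - 1) / (1 - cl) with hb
  have hbpos : 0 < b := div_pos (by linarith) (by linarith)
  have hd : 0 < ch - cl := by linarith
  have hden : 0 < 1 + b * exp s := by positivity
  have hlow : logistic cl ch b s - cl = (ch - cl) / (1 + b * exp s) := by
    unfold logistic; ring
  have hup : ch - logistic cl ch b s = (ch - cl) * (b * exp s) / (1 + b * exp s) := by
    unfold logistic; field_simp; ring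
  unfold derivH'
  rw [hlow, hup, ← hb, log_div hd.ne' hden.ne', log_div (by positivity) hden.ne',
    log_mul hd.ne' (by positivity), log_mul hbpos.ne' (exp_pos s).ne', log_exp]
  ring

lemma lagrangian_le_of_derivH'_eq {cl ch q μ lam x y : ℝ} (hlam : 0 ≤ lam)
    (hx : x ∈ Set.Icc cl ch) (hy : y ∈ Set.Ioo cl ch) (hcrit : q - μ = lam * derivH' cl ch y) :
    x * q - lam * H' cl ch x - μ * x ≤ y * q - lam * H' cl ch y - μ * y := by
  have h := mul_le_mul_of_nonneg_left (H'_add_sub_mul_derivH'_le hx hy) hlam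
  linear_combination h + (x - y) * hcrit

lemma sum_mul_le_sum_mul_of_lagrangian_le {ι : Type*} {s : Finset ι} {w x y f g : ι → ℝ}
    {μ : ℝ} (hw : ∀ i ∈ s, 0 ≤ w i) (hxy : ∑ i ∈ s, w i * x i = ∑ i ∈ s, w i * y i)
    (h : ∀ i ∈ s, f i - μ * x i ≤ g i - μ * y i) :
    ∑ i ∈ s, w i * f i ≤ ∑ i ∈ s, w i * g i := by
  have hsum := sum_le_sum fun i hi => mul_le_mul_of_nonneg_left (h i hi) (hw i hi)
  have hmul : ∀ z : ι → ℝ, ∑ i ∈ s, w i * (μ * z i) = μ * ∑ i ∈ s, w i * z i := fun z => by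
    rw [mul_sum]; exact sum_congr rfl fun i _ => mul_left_comm _ _ _
  simp only [mul_sub, sum_sub_distrib, hmul, hxy] at hsum
  linarith

theorem stmt13_general {A : Type*} [Fintype A]
    (p : A → ℝ) (hp : ∀ a, 0 < p a)
    (q : A → ℝ) (lam : ℝ) (hlam : 0 < lam)
    (cl ch b : ℝ) (hcl : cl < 1) (hch : 1 < ch) (hb : b = (ch - 1) / (1 - cl))
    (μ : ℝ) (ρstar : A → ℝ)
    (hρ : ∀ a, ρstar a = cl + (ch - cl) / (1 + b * Real.exp (-(q a - μ) / lam)))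
    (hnorm : ∑ a, p a * ρstar a = 1) :
    (∀ a, cl < ρstar a ∧ ρstar a < ch) ∧
    (∀ ρ : A → ℝ, (∀ a, cl < ρ a ∧ ρ a < ch) → (∑ a, p a * ρ a = 1) →
      ∑ a, p a * (ρ a * q a - lam * H' cl ch (ρ a)) ≤
        ∑ a, p a * (ρstar a * q a - lam * H' cl ch (ρstar a))) := by
  have hρstar : ∀ a, ρstar a = logistic cl ch b (-(q a - μ) / lam) := hρ
  have hbounds : ∀ a, ρstar a ∈ Set.Ioo cl ch := fun a => hρstar a ▸
    logistic_mem_Ioo (by linarith) (hb ▸ div_pos (by linarith) (by linarith)) _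
  have hcrit : ∀ a, q a - μ = lam * derivH' cl ch (ρstar a) := fun a => by
    rw [hρstar, hb, derivH'_logistic hcl hch]
    field_simp
  refine ⟨hbounds, fun ρ hρb hρsum => ?_⟩
  refine sum_mul_le_sum_mul_of_lagrangian_le (μ := μ) (fun a _ => (hp a).le)
    (hρsum.trans hnorm.symm) fun a _ => ?_
  exact lagrangian_le_of_derivH'_eq hlam.le (Set.Ioo_subset_Icc_self (hρb a)) (hbounds a) (hcrit a)

theorem stmt13 {A : Type*} [Fintype A] [Nonempty A]
    (p : A → ℝ) (hp : ∀ a, 0 < p a) (hpsum : ∑ a, p a = 1)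
    (q : A → ℝ) (lam : ℝ) (hlam : 0 < lam)
    (cl ch b : ℝ) (hcl : cl < 1) (hch : 1 < ch) (hb : b = (ch - 1) / (1 - cl))
    (μ : ℝ) (ρstar : A → ℝ)
    (hρ : ∀ a, ρstar a = cl + (ch - cl) / (1 + b * Real.exp (-(q a - μ) / lam)))
    (hnorm : ∑ a, p a * ρstar a = 1) :
    (∀ a, cl < ρstar a ∧ ρstar a < ch) ∧
    (∀ ρ : A → ℝ, (∀ a, cl < ρ a ∧ ρ a < ch) → (∑ a, p a * ρ a = 1) →
      ∑ a, p a * (ρ a * q a - lam * H' cl ch (ρ a)) ≤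
        ∑ a, p a * (ρstar a * q a - lam * H' cl ch (ρstar a))) :=
  stmt13_general p hp q lam hlam cl ch b hcl hch hb μ ρstar hρ hnorm
end

section
/- For μ ∈ ℝ, the following are equivalent: (i) ∑_{a∈A} p(a)·ρ*_μ(a) = 1, where ρ*_μ(a) = c_l + (c_h − c_l)/(1 + b·exp(−(q(a) − μ)/λ)); and (ii) ∑_{a∈A} p(a)·(1 − exp(−(q(a) − μ)/λ))/(1 + b·exp(−(q(a) − μ)/λ)) = 0. Moreover, any μ satisfying these conditions is a global minimizer over ℝ of the function μ' ↦ ∑_{a∈A} p(a)·g'((q(a) − μ')/λ). (Characterization of the soft-quantile baseline in the asymmetric bounded-ratio problem.) -/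
-- tangent line inequality for f(t) = log(exp(α t) + b exp(-β t))
lemma tangent' (α β b : ℝ) (hα : 0 < α) (hβ : 0 < β) (hb : 0 < b)
    (hαβ : α + β = 1) (hβb : β * b = α) (x y : ℝ) :
    Real.log (Real.exp (α * x) + b * Real.exp (-β * x)) +
      α * ((1 - Real.exp (-x)) / (1 + b * Real.exp (-x))) * (y - x)
      ≤ Real.log (Real.exp (α * y) + b * Real.exp (-β * y)) := by
  have hE : (0:ℝ) < Real.exp (α * x) := Real.exp_pos _
  have hF : (0:ℝ) < Real.exp (-β * x) := Real.exp_pos _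
  set Nx := Real.exp (α * x) + b * Real.exp (-β * x) with hNxdef
  set Ny := Real.exp (α * y) + b * Real.exp (-β * y) with hNydef
  have hNx : 0 < Nx := by positivity
  have hNy : 0 < Ny := by positivity
  set w1 := Real.exp (α * x) / Nx with hw1
  set w2 := b * Real.exp (-β * x) / Nx with hw2
  have hw1n : 0 ≤ w1 := by positivity
  have hw2n : 0 ≤ w2 := by positivity
  have hwsum : w1 + w2 = 1 := by
    rw [hw1, hw2, ← add_div, hNxdef, div_self (ne_of_gt hNx)]
  have key := convexOn_exp.2 (Set.mem_univ (α * (y - x))) (Set.mem_univ (-β * (y - x)))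
    hw1n hw2n hwsum
  simp only [smul_eq_mul] at key
  -- combine: Nx * exp(lhs) ≤ Ny
  have hebx : Real.exp (-β * x) = Real.exp (α * x) * Real.exp (-x) := by
    rw [← Real.exp_add]; congr 1
    have : β = 1 - α := by linarith
    rw [this]; ring
  set e := Real.exp (-x) with hedef
  have he : 0 < e := Real.exp_pos _
  have hD : 0 < 1 + b * e := by positivity
  have hs : w1 * (α * (y - x)) + w2 * (-β * (y - x))
      = α * ((1 - e) / (1 + b * e)) * (y - x) := by
    rw [hw1, hw2, hNxdef, hebx]
    field_simp
    rw [← hβb]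
    ring
  have h1 : Real.exp (α * x) * Real.exp (α * (y - x)) = Real.exp (α * y) := by
    rw [← Real.exp_add]; ring_nf
  have h2 : Real.exp (-β * x) * Real.exp (-β * (y - x)) = Real.exp (-β * y) := by
    rw [← Real.exp_add]; ring_nf
  have hrhs : w1 * Real.exp (α * (y - x)) + w2 * Real.exp (-β * (y - x)) = Ny / Nx := by
    rw [hw1, hw2]
    have : Real.exp (α * x) / Nx * Real.exp (α * (y - x)) +
        b * Real.exp (-β * x) / Nx * Real.exp (-β * (y - x)) =
        (Real.exp (α * x) * Real.exp (α * (y - x)) +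
          b * (Real.exp (-β * x) * Real.exp (-β * (y - x)))) / Nx := by ring
    rw [this, h1, h2]
  rw [hs, hrhs] at key
  have hlog := Real.log_le_log (Real.exp_pos _) key
  rw [Real.log_exp, Real.log_div (ne_of_gt hNy) (ne_of_gt hNx)] at hlog
  linarith

noncomputable def g' (cl ch x : ℝ) : ℝ :=
  Real.log (Real.exp (((ch - 1) / (ch - cl)) * x) +
    ((ch - 1) / (1 - cl)) * Real.exp (-((1 - cl) / (ch - cl)) * x))

theorem stmt14 {A : Type*} [Fintype A] [Nonempty A]
    (p : A → ℝ) (hp : ∀ a, 0 < p a) (hpsum : ∑ a, p a = 1)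
    (q : A → ℝ) (lam : ℝ) (hlam : 0 < lam)
    (cl ch b : ℝ) (hcl : cl < 1) (hch : 1 < ch) (hb : b = (ch - 1) / (1 - cl))
    (μ : ℝ) :
    ((∑ a, p a * (cl + (ch - cl) / (1 + b * Real.exp (-(q a - μ) / lam))) = 1) ↔
      (∑ a, p a * ((1 - Real.exp (-(q a - μ) / lam)) /
        (1 + b * Real.exp (-(q a - μ) / lam))) = 0)) ∧
    ((∑ a, p a * (cl + (ch - cl) / (1 + b * Real.exp (-(q a - μ) / lam))) = 1) →
      ∀ μ' : ℝ, ∑ a, p a * g' cl ch ((q a - μ) / lam) ≤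
        ∑ a, p a * g' cl ch ((q a - μ') / lam)) := by
  subst hb
  have h1cl : (0:ℝ) < 1 - cl := by linarith
  have hch1 : (0:ℝ) < ch - 1 := by linarith
  have hcc : (0:ℝ) < ch - cl := by linarith
  set b := (ch - 1) / (1 - cl) with hbdef
  have hb0 : 0 < b := div_pos hch1 h1cl
  have hbrel : b * (1 - cl) = ch - 1 := by rw [hbdef]; field_simp
  -- pointwise identity for the iff
  have key : ∀ a, p a * (cl + (ch - cl) / (1 + b * Real.exp (-(q a - μ) / lam))) - p a
      = (ch - 1) * (p a * ((1 - Real.exp (-(q a - μ) / lam)) /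
          (1 + b * Real.exp (-(q a - μ) / lam)))) := by
    intro a
    set E := Real.exp (-(q a - μ) / lam) with hEdef
    have he : 0 < E := Real.exp_pos _
    have hD : 0 < 1 + b * E := by positivity
    rw [hbdef] at hD ⊢
    field_simp
    ring
  have hkeysum : ∑ a, p a * (cl + (ch - cl) / (1 + b * Real.exp (-(q a - μ) / lam))) - 1
      = (ch - 1) * ∑ a, p a * ((1 - Real.exp (-(q a - μ) / lam)) /
          (1 + b * Real.exp (-(q a - μ) / lam))) := by
    have step : ∑ a, (p a * (cl + (ch - cl) / (1 + b * Real.exp (-(q a - μ) / lam))) - p a)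
        = (ch - 1) * ∑ a, p a * ((1 - Real.exp (-(q a - μ) / lam)) /
            (1 + b * Real.exp (-(q a - μ) / lam))) := by
      rw [Finset.mul_sum]
      exact Finset.sum_congr rfl fun a _ => key a
    rw [← step, Finset.sum_sub_distrib, hpsum]
  have hiff : (∑ a, p a * (cl + (ch - cl) / (1 + b * Real.exp (-(q a - μ) / lam))) = 1) ↔
      (∑ a, p a * ((1 - Real.exp (-(q a - μ) / lam)) /
        (1 + b * Real.exp (-(q a - μ) / lam))) = 0) := by
    constructor
    · intro h
      have h0 : (ch - 1) * ∑ a, p a * ((1 - Real.exp (-(q a - μ) / lam)) /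
          (1 + b * Real.exp (-(q a - μ) / lam))) = 0 := by rw [← hkeysum, h]; ring
      rcases mul_eq_zero.1 h0 with h' | h'
      · exact absurd h' (ne_of_gt hch1)
      · exact h'
    · intro h
      have := hkeysum
      rw [h, mul_zero, sub_eq_zero] at this
      exact this
  refine ⟨hiff, fun h μ' => ?_⟩
  have hS : ∑ a, p a * ((1 - Real.exp (-(q a - μ) / lam)) /
      (1 + b * Real.exp (-(q a - μ) / lam))) = 0 := hiff.1 h
  set α := (ch - 1) / (ch - cl) with hαdef
  set β := (1 - cl) / (ch - cl) with hβdef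
  have hα : 0 < α := div_pos hch1 hcc
  have hβ : 0 < β := div_pos h1cl hcc
  have hαβ : α + β = 1 := by rw [hαdef, hβdef]; field_simp; try ring
  have hβb : β * b = α := by rw [hαdef, hβdef, hbdef]; field_simp; try ring
  -- pointwise tangent inequality
  have hpt : ∀ a, p a * g' cl ch ((q a - μ) / lam) +
      p a * (α * ((1 - Real.exp (-(q a - μ) / lam)) /
        (1 + b * Real.exp (-(q a - μ) / lam))) * ((μ - μ') / lam))
      ≤ p a * g' cl ch ((q a - μ') / lam) := by
    intro a
    have ht := tangent' α β b hα hβ hb0 hαβ hβb ((q a - μ) / lam) ((q a - μ') / lam)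
    have hyx : (q a - μ') / lam - (q a - μ) / lam = (μ - μ') / lam := by
      field_simp
      ring
    have hnx : -((q a - μ) / lam) = -(q a - μ) / lam := by ring
    rw [hyx, hnx] at ht
    have := mul_le_mul_of_nonneg_left ht (le_of_lt (hp a))
    calc p a * g' cl ch ((q a - μ) / lam) +
        p a * (α * ((1 - Real.exp (-(q a - μ) / lam)) /
          (1 + b * Real.exp (-(q a - μ) / lam))) * ((μ - μ') / lam))
        = p a * (Real.log (Real.exp (α * ((q a - μ) / lam)) +
            b * Real.exp (-β * ((q a - μ) / lam))) +
          α * ((1 - Real.exp (-(q a - μ) / lam)) /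
            (1 + b * Real.exp (-(q a - μ) / lam))) * ((μ - μ') / lam)) := by
          rw [g', hαdef, hβdef, hbdef]; ring
      _ ≤ p a * Real.log (Real.exp (α * ((q a - μ') / lam)) +
            b * Real.exp (-β * ((q a - μ') / lam))) := this
      _ = p a * g' cl ch ((q a - μ') / lam) := by rw [g', hαdef, hβdef, hbdef]
  calc ∑ a, p a * g' cl ch ((q a - μ) / lam)
      = ∑ a, (p a * g' cl ch ((q a - μ) / lam) +
        p a * (α * ((1 - Real.exp (-(q a - μ) / lam)) /
          (1 + b * Real.exp (-(q a - μ) / lam))) * ((μ - μ') / lam))) := by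
        rw [Finset.sum_add_distrib]
        have : ∑ a, p a * (α * ((1 - Real.exp (-(q a - μ) / lam)) /
            (1 + b * Real.exp (-(q a - μ) / lam))) * ((μ - μ') / lam))
            = (α * ((μ - μ') / lam)) * ∑ a, p a * ((1 - Real.exp (-(q a - μ) / lam)) /
              (1 + b * Real.exp (-(q a - μ) / lam))) := by
          rw [Finset.mul_sum]; exact Finset.sum_congr rfl fun a _ => by ring
        rw [this, hS, mul_zero, add_zero]
    _ ≤ ∑ a, p a * g' cl ch ((q a - μ') / lam) := Finset.sum_le_sum fun a _ => hpt a
end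

section
/- Let μ ∈ ℝ satisfy ∑_{a∈A} p(a)·ρ*_μ(a) = 1, where ρ*_μ(a) = c_l + (c_h − c_l)/(1 + b·exp(−(q(a) − μ)/λ)), and set V = ∑_{a∈A} p(a)·q(a) and Ã(a) = q(a) − μ. Then ∑_{a∈A} p(a)·ρ*_μ(a)·q(a) = V + (c_h − 1)·∑_{a∈A} p(a)·((1 + exp(−Ã(a)/λ))/(1 + b·exp(−Ã(a)/λ)))·tanh(Ã(a)/(2λ))·Ã(a), and the correction term ∑_{a∈A} p(a)·((1 + exp(−Ã(a)/λ))/(1 + b·exp(−Ã(a)/λ)))·tanh(Ã(a)/(2λ))·Ã(a) is nonnegative. (Per-state asymmetric monotonic performance guarantee.) -/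
lemma tanh_mul_self_nonneg (t x : ℝ) (ht : 0 < t) :
    0 ≤ Real.tanh (x / t) * x := by
  rw [Real.tanh_eq_sinh_div_cosh]
  rcases le_or_gt 0 x with hx | hx
  · exact mul_nonneg (div_nonneg (Real.sinh_nonneg_iff.2 (div_nonneg hx ht.le))
      (Real.cosh_pos _).le) hx
  · exact mul_nonneg_iff.2 (Or.inr ⟨div_nonpos_of_nonpos_of_nonneg
      (Real.sinh_nonpos_iff.2 (div_nonpos_of_nonpos_of_nonneg hx.le ht.le))
      (Real.cosh_pos _).le, hx.le⟩)

lemma key_identity (lam x cl ch b : ℝ) (hlam : 0 < lam)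
    (hcl : cl < 1) (hch : 1 < ch) (hb : b = (ch - 1) / (1 - cl)) :
    cl + (ch - cl) / (1 + b * Real.exp (-x / lam)) - 1 =
      (ch - 1) * ((1 + Real.exp (-x / lam)) / (1 + b * Real.exp (-x / lam))) *
        Real.tanh (x / (2 * lam)) := by
  have hb0 : 0 < b := by
    rw [hb]; exact div_pos (by linarith) (by linarith)
  set u := Real.exp (x / (2 * lam)) with hu
  have hupos : 0 < u := Real.exp_pos _
  have hE : Real.exp (-x / lam) = (u * u)⁻¹ := by
    rw [hu, ← Real.exp_add, ← Real.exp_neg]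
    congr 1
    field_simp
    ring
  have h3 : u + u⁻¹ ≠ 0 := by positivity
  have htanh : Real.tanh (x / (2 * lam)) = (u - u⁻¹) / (u + u⁻¹) := by
    rw [Real.tanh_eq_sinh_div_cosh, Real.sinh_eq, Real.cosh_eq, ← hu, Real.exp_neg, ← hu]
    field_simp
  have hden : 0 < 1 + b * Real.exp (-x / lam) :=
    by positivity
  rw [hE, htanh]
  have h1 : u * u ≠ 0 := by positivity
  have h2 : 1 + b * (u * u)⁻¹ ≠ 0 := by rw [hE] at hden; positivity
  have hbcl : b * (1 - cl) = ch - 1 := by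
    rw [hb, div_mul_cancel₀ _ (by linarith : (1:ℝ) - cl ≠ 0)]
  field_simp
  linear_combination (-1 : ℝ) * hbcl

theorem stmt15 {A : Type*} [Fintype A] [Nonempty A]
    (p : A → ℝ) (hp : ∀ a, 0 < p a) (hpsum : ∑ a, p a = 1)
    (q : A → ℝ) (lam : ℝ) (hlam : 0 < lam)
    (cl ch b : ℝ) (hcl : cl < 1) (hch : 1 < ch) (hb : b = (ch - 1) / (1 - cl))
    (μ : ℝ) (ρstar : A → ℝ)
    (hρ : ∀ a, ρstar a = cl + (ch - cl) / (1 + b * Real.exp (-(q a - μ) / lam)))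
    (hnorm : ∑ a, p a * ρstar a = 1)
    (V : ℝ) (hV : V = ∑ a, p a * q a)
    (Atil : A → ℝ) (hA : ∀ a, Atil a = q a - μ) :
    (∑ a, p a * ρstar a * q a =
      V + (ch - 1) * ∑ a, p a * ((1 + Real.exp (-Atil a / lam)) /
        (1 + b * Real.exp (-Atil a / lam))) * Real.tanh (Atil a / (2 * lam)) * Atil a) ∧
    0 ≤ ∑ a, p a * ((1 + Real.exp (-Atil a / lam)) /
        (1 + b * Real.exp (-Atil a / lam))) * Real.tanh (Atil a / (2 * lam)) * Atil a := by
  have hb0 : 0 < b := by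
    rw [hb]; exact div_pos (by linarith) (by linarith)
  have hpt : ∀ a, (ch - 1) * (p a * ((1 + Real.exp (-Atil a / lam)) /
      (1 + b * Real.exp (-Atil a / lam))) * Real.tanh (Atil a / (2 * lam)) * Atil a) =
      p a * (ρstar a - 1) * Atil a := by
    intro a
    have := key_identity lam (Atil a) cl ch b hlam hcl hch hb
    rw [hρ a, hA a] at *
    rw [this]
    ring
  constructor
  · have hsum : (ch - 1) * ∑ a, p a * ((1 + Real.exp (-Atil a / lam)) /
        (1 + b * Real.exp (-Atil a / lam))) * Real.tanh (Atil a / (2 * lam)) * Atil a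
        = ∑ a, p a * (ρstar a - 1) * Atil a := by
      rw [Finset.mul_sum]
      exact Finset.sum_congr rfl fun a _ => hpt a
    rw [hsum, hV]
    have expand : ∀ a, p a * (ρstar a - 1) * Atil a =
        p a * ρstar a * q a - p a * q a - μ * (p a * ρstar a) + μ * p a := by
      intro a; rw [hA a]; ring
    simp only [expand]
    rw [Finset.sum_add_distrib, Finset.sum_sub_distrib, Finset.sum_sub_distrib,
      ← Finset.mul_sum, ← Finset.mul_sum, hnorm, hpsum]
    ring
  · apply Finset.sum_nonneg
    intro a _
    have hden : 0 < 1 + b * Real.exp (-Atil a / lam) := by positivity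
    have h1 : 0 ≤ p a * ((1 + Real.exp (-Atil a / lam)) /
        (1 + b * Real.exp (-Atil a / lam))) :=
      mul_nonneg (hp a).le (by positivity)
    have h2 := tanh_mul_self_nonneg (2 * lam) (Atil a) (by positivity)
    calc (0:ℝ) ≤ (p a * ((1 + Real.exp (-Atil a / lam)) /
        (1 + b * Real.exp (-Atil a / lam)))) * (Real.tanh (Atil a / (2 * lam)) * Atil a) :=
          mul_nonneg h1 h2
      _ = _ := by ring
end

section
/- Let c_l, c_h be real numbers with c_l < 1 < c_h and set b = (c_h−1)/(1−c_l). Then for every x ∈ ℝ, (c_l + (c_h − c_l)/(1 + b·exp(−x))) − 1 = (c_h − 1)·((1 + exp(−x))/(1 + b·exp(−x)))·tanh(x/2). In particular, the deviation of the asymmetric optimal ratio from 1 has the same sign as x. -/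
lemma tanh_half (x : ℝ) :
    Real.tanh (x / 2) = (1 - Real.exp (-x)) / (1 + Real.exp (-x)) := by
  rw [Real.tanh_eq_sinh_div_cosh, Real.sinh_eq, Real.cosh_eq]
  have hne : Real.exp (x / 2) + Real.exp (-(x / 2)) ≠ 0 := by positivity
  have hne2 : (1 : ℝ) + Real.exp (-x) ≠ 0 := by positivity
  have key : Real.exp (-x) = Real.exp (-(x/2)) * Real.exp (-(x/2)) := by
    rw [← Real.exp_add]; ring_nf
  have key2 : Real.exp (x/2) * Real.exp (-(x/2)) = 1 := by
    rw [← Real.exp_add]; simp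
  have hne' : (Real.exp (x / 2) + Real.exp (-(x / 2))) / 2 ≠ 0 := by positivity
  rw [div_eq_div_iff hne' hne2]
  linear_combination Real.exp (x/2) * key + Real.exp (-(x/2)) * key2

theorem stmt19 (cl ch b : ℝ) (hcl : cl < 1) (hch : 1 < ch)
    (hb : b = (ch - 1) / (1 - cl)) (x : ℝ) :
    (cl + (ch - cl) / (1 + b * Real.exp (-x))) - 1 =
      (ch - 1) * ((1 + Real.exp (-x)) / (1 + b * Real.exp (-x))) *
        Real.tanh (x / 2) := by
  have hbpos : 0 < b := by
    rw [hb]; apply div_pos <;> linarith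
  have hd : (0:ℝ) < 1 + b * Real.exp (-x) := by positivity
  have hcl' : (1:ℝ) - cl ≠ 0 := by linarith
  rw [tanh_half]
  have hne2 : (1:ℝ) + Real.exp (-x) ≠ 0 := by positivity
  have hbe : b * (1 - cl) = ch - 1 := by
    rw [hb]; field_simp
  field_simp
  linear_combination (-(Real.exp (-x))) * hbe
end
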